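/- arXiv:2502.21058 — 8 statements merged into one kernel-verified Lean document; each statement's English description precedes it below -/
import Mathlib

section
/- Let S be a (σ,δ)-free skew extension of R generated by x₁,…,xₙ. Given any R-ring A and elements a₁,…,aₙ ∈ A satisfying r·a_j = Σᵢ aᵢσ_{ij}(r) + δ_j(r) for all j and r ∈ R, there exists a unique R-ring homomorphism φ: S → A with φ(xᵢ) = aᵢ for all i. -/
/-- `δ : R → Rⁿ` is a right `σ`-derivation: additive and
`δ(rs) = δ(r)σ(s) + rδ(s)` (row-by-matrix multiplication componentwise). -/
def IsRightSigmaDeriv {R : Type} [Ring R] {n : ℕ}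
    (σ : R →+* Matrix (Fin n) (Fin n) R) (δ : R → Fin n → R) : Prop :=
  (∀ r s : R, δ (r + s) = δ r + δ s) ∧
  ∀ (r s : R) (j : Fin n), δ (r * s) j = (∑ i, δ r i * σ s i j) + r * δ s j

/-- `S` (an `R`-ring via `lam`) together with `x₁,…,xₙ` is a `(σ,δ)`-free skew
extension of `R`: the multiplicative submonoid generated by the `xᵢ` is free on them
(the induced monoid homomorphism from the free monoid on `n` letters is injective),
`S` is a free right `R`-module with basis the set of monomials in the `xᵢ`
(every element of `S` is uniquely a finite sum `Σ_w w·a_w`), and the commutation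
rule `r·x_j = Σᵢ xᵢσ_{ij}(r) + δ_j(r)` holds. -/
def IsSkewFreeExt {R : Type} [Ring R] {n : ℕ}
    (σ : R →+* Matrix (Fin n) (Fin n) R) (δ : R → Fin n → R)
    (S : Type) [Ring S] (lam : R →+* S) (x : Fin n → S) : Prop :=
  Function.Injective (FreeMonoid.lift x) ∧
  Function.Bijective (fun c : FreeMonoid (Fin n) →₀ R =>
    c.sum fun w a => FreeMonoid.lift x w * lam a) ∧
  ∀ (r : R) (j : Fin n), lam r * x j = (∑ i, x i * lam (σ r i j)) + lam (δ r j)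

/-!
`S` is a free right `R`-module on the monomials `w(x)`, so there is a unique additive map
`ψ : S → A` with `ψ(w(x)·r) = w(a)·r`. By additivity, `ψ(st) = ψ(s)ψ(t)` reduces to
`t = w(x)·r`, hence to right multiplication by `R` and by a single `x_j`; the latter works
because moving `r` past `x_j` in `S` and past `a_j` in `A` follows the same commutation rule.
Uniqueness holds because `S` is spanned by the `w(x)·r`, on which any `R`-ring homomorphism sending `x` to `a` is forced.
-/

open FreeMonoid

namespace SkewFreeExt

section Commutation

variable {ι R M : Type} [Fintype ι] [Ring R] [Ring M]

def SkewCommutes (σ : R → Matrix ι ι R) (δ : R → ι → R) (lamM : R →+* M) (y : ι → M) : Prop :=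
  ∀ r j, lamM r * y j = (∑ i, y i * lamM (σ r i j)) + lamM (δ r j)

theorem SkewCommutes.lift_mul_mul {σ : R → Matrix ι ι R} {δ : R → ι → R} {lamM : R →+* M}
    {y : ι → M} (h : SkewCommutes σ δ lamM y) (w : FreeMonoid ι) (r : R) (j : ι) :
    lift y w * lamM r * y j
      = (∑ i, lift y (w * of i) * lamM (σ r i j)) + lift y w * lamM (δ r j) := by
  simp only [mul_assoc, h r j, mul_add, Finset.mul_sum, map_mul, lift_eval_of]

end Commutation

variable {ι R S A : Type} [Ring R] [Ring S] [Ring A]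

noncomputable def monomialSum (lam : R →+* S) (x : ι → S) : (FreeMonoid ι →₀ R) →+ S :=
  Finsupp.liftAddHom fun w => (AddMonoidHom.mulLeft (lift x w)).comp lam.toAddMonoidHom

theorem coe_monomialSum (lam : R →+* S) (x : ι → S) :
    ⇑(monomialSum lam x) = fun c => c.sum fun w r => lift x w * lam r :=
  funext (Finsupp.liftAddHom_apply _)

@[simp]
theorem monomialSum_single (lam : R →+* S) (x : ι → S) (w : FreeMonoid ι) (r : R) :
    monomialSum lam x (Finsupp.single w r) = lift x w * lam r :=
  Finsupp.liftAddHom_apply_single _ _ _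

variable {lam : R →+* S} {x : ι → S}

theorem addMonoidHom_ext (hsurj : Function.Surjective (monomialSum lam x)) {f g : S →+ A}
    (h : ∀ w r, f (lift x w * lam r) = g (lift x w * lam r)) : f = g :=
  (AddMonoidHom.cancel_right hsurj).mp <| Finsupp.addHom_ext fun w r => by simpa using h w r

theorem map_mul_right_of_monomial (hsurj : Function.Surjective (monomialSum lam x))
    (f : S →+ A) (t : S) (b : A)
    (h : ∀ w r, f (lift x w * lam r * t) = f (lift x w * lam r) * b) (s : S) :
    f (s * t) = f s * b :=
  DFunLike.congr_fun (addMonoidHom_ext (f := f.comp (AddMonoidHom.mulRight t))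
    (g := (AddMonoidHom.mulRight b).comp f) hsurj h) s

theorem ringHom_ext (hsurj : Function.Surjective (monomialSum lam x)) {f g : S →+* A}
    (hlam : f.comp lam = g.comp lam) (hx : ∀ i, f (x i) = g (x i)) : f = g := by
  have hlift : ∀ (φ : S →+* A) w, φ (lift x w) = lift (φ ∘ x) w := fun φ w =>
    DFunLike.congr_fun (comp_lift φ.toMonoidHom x) w
  have hfg : ⇑f ∘ x = ⇑g ∘ x := funext hx
  refine RingHom.coe_addMonoidHom_injective (addMonoidHom_ext hsurj fun w r => ?_)
  change f (lift x w * lam r) = g (lift x w * lam r)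
  rw [map_mul, map_mul, hlift, hlift, hfg, ← RingHom.comp_apply, hlam, RingHom.comp_apply]

variable (hbij : Function.Bijective (monomialSum lam x)) (lamA : R →+* A) (a : ι → A)

noncomputable def skewLift : S →+ A :=
  (monomialSum lamA a).comp (AddEquiv.ofBijective _ hbij).symm.toAddMonoidHom

theorem skewLift_monomial (w : FreeMonoid ι) (r : R) :
    skewLift hbij lamA a (lift x w * lam r) = lift a w * lamA r := by
  rw [← monomialSum_single, skewLift, AddMonoidHom.comp_apply, AddEquiv.coe_toAddMonoidHom,
    ← AddEquiv.ofBijective_apply _ hbij, AddEquiv.symm_apply_apply, monomialSum_single]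

theorem skewLift_lam (r : R) : skewLift hbij lamA a (lam r) = lamA r := by
  simpa using skewLift_monomial hbij lamA a 1 r

theorem skewLift_one : skewLift hbij lamA a 1 = 1 := by
  simpa using skewLift_lam hbij lamA a 1

theorem skewLift_lift (w : FreeMonoid ι) : skewLift hbij lamA a (lift x w) = lift a w := by
  simpa using skewLift_monomial hbij lamA a w 1

theorem skewLift_x (i : ι) : skewLift hbij lamA a (x i) = a i := by
  simpa using skewLift_lift hbij lamA a (of i)

theorem skewLift_mul_lam (s : S) (r : R) :
    skewLift hbij lamA a (s * lam r) = skewLift hbij lamA a s * lamA r :=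
  map_mul_right_of_monomial hbij.2 _ _ _ (fun w r' => by
    simp only [mul_assoc, ← map_mul, skewLift_monomial]) s

variable [Fintype ι] {σ : R → Matrix ι ι R} {δ : R → ι → R}

theorem skewLift_mul_x (hcomm : SkewCommutes σ δ lam x) (ha : SkewCommutes σ δ lamA a)
    (s : S) (j : ι) : skewLift hbij lamA a (s * x j) = skewLift hbij lamA a s * a j :=
  map_mul_right_of_monomial hbij.2 _ _ _ (fun w r => by
    simp only [hcomm.lift_mul_mul, ha.lift_mul_mul, map_add, map_sum, skewLift_monomial]) s

theorem skewLift_mul_lift (hcomm : SkewCommutes σ δ lam x) (ha : SkewCommutes σ δ lamA a)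
    (w : FreeMonoid ι) (s : S) :
    skewLift hbij lamA a (s * lift x w) = skewLift hbij lamA a s * lift a w := by
  induction w using FreeMonoid.inductionOn' generalizing s with
  | one => simp
  | of_mul i w ih =>
    rw [map_mul (lift x), map_mul (lift a), lift_eval_of, lift_eval_of, ← mul_assoc, ih,
      skewLift_mul_x hbij lamA a hcomm ha, mul_assoc]

theorem skewLift_mul (hcomm : SkewCommutes σ δ lam x) (ha : SkewCommutes σ δ lamA a)
    (s t : S) :
    skewLift hbij lamA a (s * t) = skewLift hbij lamA a s * skewLift hbij lamA a t := by
  have key := addMonoidHom_ext (A := A) hbij.2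
    (f := (skewLift hbij lamA a).comp (AddMonoidHom.mulLeft s))
    (g := (AddMonoidHom.mulLeft (skewLift hbij lamA a s)).comp (skewLift hbij lamA a))
    fun w r => by
      simp only [AddMonoidHom.comp_apply, AddMonoidHom.coe_mulLeft, ← mul_assoc,
        skewLift_mul_lam, skewLift_mul_lift hbij lamA a hcomm ha, skewLift_lift]
  exact DFunLike.congr_fun key t

noncomputable def skewLiftRingHom (hcomm : SkewCommutes σ δ lam x)
    (ha : SkewCommutes σ δ lamA a) : S →+* A :=
  { skewLift hbij lamA a with
    map_one' := skewLift_one hbij lamA a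
    map_mul' := skewLift_mul hbij lamA a hcomm ha }

end SkewFreeExt

open SkewFreeExt in
theorem skewFreeExt_universal_general {R : Type} [Ring R] {n : ℕ}
    (σ : R →+* Matrix (Fin n) (Fin n) R) (δ : R → Fin n → R)
    (S : Type) [Ring S] (lam : R →+* S) (x : Fin n → S)
    (hS : IsSkewFreeExt σ δ S lam x)
    (A : Type) [Ring A] (lamA : R →+* A) (a : Fin n → A)
    (ha : ∀ (r : R) (j : Fin n),
      lamA r * a j = (∑ i, a i * lamA (σ r i j)) + lamA (δ r j)) :
    ∃! φ : S →+* A, φ.comp lam = lamA ∧ ∀ i, φ (x i) = a i := by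
  obtain ⟨-, hbij, hcomm⟩ := hS
  rw [← coe_monomialSum] at hbij
  let φ := skewLiftRingHom hbij lamA a hcomm ha
  have hφlam : φ.comp lam = lamA := RingHom.ext (skewLift_lam hbij lamA a)
  have hφx : ∀ i, φ (x i) = a i := skewLift_x hbij lamA a
  refine ⟨φ, ⟨hφlam, hφx⟩, fun ψ ⟨hψlam, hψx⟩ => ?_⟩
  exact ringHom_ext hbij.2 (hψlam.trans hφlam.symm) fun i => (hψx i).trans (hφx i).symm

/-- Universal property of the `(σ,δ)`-free skew extension: given an `R`-ring `A`
and elements `a₁,…,aₙ` of `A` satisfying `r·a_j = Σᵢ aᵢσ_{ij}(r) + δ_j(r)`, there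
is a unique `R`-ring homomorphism `φ : S → A` with `φ(xᵢ) = aᵢ`. -/
theorem skewFreeExt_universal {R : Type} [Ring R] {n : ℕ}
    (σ : R →+* Matrix (Fin n) (Fin n) R) (δ : R → Fin n → R)
    (hδ : IsRightSigmaDeriv σ δ)
    (S : Type) [Ring S] (lam : R →+* S) (x : Fin n → S)
    (hS : IsSkewFreeExt σ δ S lam x)
    (A : Type) [Ring A] (lamA : R →+* A) (a : Fin n → A)
    (ha : ∀ (r : R) (j : Fin n),
      lamA r * a j = (∑ i, a i * lamA (σ r i j)) + lamA (δ r j)) :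
    ∃! φ : S →+* A, φ.comp lam = lamA ∧ ∀ i, φ (x i) = a i :=
  skewFreeExt_universal_general σ δ S lam x hS A lamA a ha
end

section
/- Let R be a ring with center C, σ: R → Mₙ(R) a diagonal ring homomorphism with σ(c) = cIₙ for all c ∈ C, and δ a right σ-derivation such that for every j there is c_j ∈ C with δ_j(c_j) invertible in R. Then each map δ'_j(r) := δ_j(r)δ_j(c_j)^{-1} is an ordinary derivation of R, and with y_j = x_j δ_j(c_j)^{-1} one has r·y_j = y_j·r + δ'_j(r) for all r ∈ R. -/
/-- Suppose `σ` is diagonal, `σ(c) = cIₙ` for every central `c`, and `c_j` is a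
central element with `δ_j(c_j)` invertible (with inverse witnessed by the unit `u`).
Then `δ'_j(r) := δ_j(r)·δ_j(c_j)⁻¹` is an ordinary derivation of `R`, and with
`y_j = x_j·δ_j(c_j)⁻¹` one has `r·y_j = y_j·r + δ'_j(r)` in `S`. -/
theorem skewFreeExt_scalar_reduction {R : Type} [Ring R] {n : ℕ}
    (σ : R →+* Matrix (Fin n) (Fin n) R) (δ : R → Fin n → R)
    (hδ : IsRightSigmaDeriv σ δ)
    (S : Type) [Ring S] (lam : R →+* S) (x : Fin n → S)
    (hS : IsSkewFreeExt σ δ S lam x)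
    (hdiag : ∀ (r : R) (i j : Fin n), i ≠ j → σ r i j = 0)
    (hcent : ∀ c : R, (∀ t : R, c * t = t * c) →
      ∀ i j : Fin n, σ c i j = if i = j then c else 0)
    (j : Fin n) (cj : R) (hcj : ∀ t : R, cj * t = t * cj)
    (u : Rˣ) (hu : (u : R) = δ cj j) :
    ((∀ r s : R, δ (r + s) j * (↑u⁻¹ : R)
        = δ r j * (↑u⁻¹ : R) + δ s j * (↑u⁻¹ : R)) ∧
      ∀ r s : R, δ (r * s) j * (↑u⁻¹ : R)
        = (δ r j * (↑u⁻¹ : R)) * s + r * (δ s j * (↑u⁻¹ : R))) ∧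
    ∀ r : R, lam r * (x j * lam (↑u⁻¹ : R))
      = (x j * lam (↑u⁻¹ : R)) * lam r + lam (δ r j * (↑u⁻¹ : R)) := by

  -- collapse the sum in the σ-derivation rule using diagonality
  have hcoll : ∀ (f : Fin n → R) (s : R),
      (∑ i, f i * σ s i j) = f j * σ s j j := by
    intro f s
    refine Finset.sum_eq_single_of_mem j (Finset.mem_univ j) ?_
    intro i _ hij
    rw [hdiag s i j hij, mul_zero]
  -- key identity: u * σ s j j = s * u
  have hkey : ∀ s : R, (↑u : R) * σ s j j = s * ↑u := by
    intro s
    have h1 := hδ.2 cj s j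
    have h2 := hδ.2 s cj j
    rw [hcj s] at h1
    rw [h1, hcoll, ← hu] at h2
    have hσcj : ∀ i : Fin n, σ cj i j = if i = j then cj else 0 :=
      fun i => hcent cj hcj i j
    have hsum2 : (∑ i, δ s i * σ cj i j) = δ s j * cj := by
      rw [hcoll, hσcj j, if_pos rfl]
    rw [hsum2, hcj (δ s j), add_comm (δ s j * cj) (s * ↑u)] at h2
    exact add_right_cancel h2
  have hkey' : ∀ s : R, σ s j j * (↑u⁻¹ : R) = (↑u⁻¹ : R) * s := by
    intro s
    have := congrArg (fun t : R => (↑u⁻¹ : R) * t * (↑u⁻¹ : R)) (hkey s)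
    simpa [mul_assoc] using this
  refine ⟨⟨?_, ?_⟩, ?_⟩
  · intro r s
    rw [hδ.1 r s]
    simp [add_mul]
  · intro r s
    rw [hδ.2 r s j, hcoll, add_mul, mul_assoc, hkey' s, ← mul_assoc, mul_assoc,
      mul_assoc r]
  · intro r
    have hcollS : (∑ i, x i * lam (σ r i j)) = x j * lam (σ r j j) := by
      refine Finset.sum_eq_single_of_mem j (Finset.mem_univ j) ?_
      intro i _ hij
      rw [hdiag r i j hij, map_zero, mul_zero]
    rw [← mul_assoc, hS.2.2 r j, hcollS, add_mul, mul_assoc, ← map_mul,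
      hkey' r, map_mul, map_mul, ← mul_assoc]
end

section
/- Let R be a ring, V a right R-module, σ: R → End(V_R) a ring homomorphism, and M = R ⊕ V the rank-1 bimodule extension of V defined by σ and the zero derivation (so r(s+v) = rs + σ(r)(v)). Then the universal R-ring U(M, ι) on M along the inclusion ι: R → M is isomorphic as an R-ring to the tensor ring T(V). -/
/-- `(U, lamU, jM)` is the universal `R`-ring on the rank-1 bimodule extension
`M = R ⊕ V` along the inclusion `ι : R → M`, where `V` is a right `R`-module and
`M` carries the bimodule structure `r•(s,v) = (rs, σ(r)(v))` (zero derivation) and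
`(s,v)·r = (sr, v·r)`: `jM` is a bimodule map with `jM∘ι = lamU`, universal among
bimodule maps `f : M → A` into `R`-rings with `f∘ι = lamA`. -/
def IsUnivOnRankOneExt {R V : Type} [Ring R] [AddCommGroup V] [Module Rᵐᵒᵖ V]
    (σ : R →+* Module.End Rᵐᵒᵖ V)
    (U : Type) [Ring U] (lamU : R →+* U) (jM : R × V →+ U) : Prop :=
  (∀ r : R, jM (r, 0) = lamU r) ∧
  (∀ (r s : R) (v : V), jM (r * s, σ r v) = lamU r * jM (s, v)) ∧
  (∀ (s : R) (v : V) (r : R),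
    jM (s * r, MulOpposite.op r • v) = jM (s, v) * lamU r) ∧
  ∀ (A : Type) [Ring A], ∀ (lamA : R →+* A) (f : R × V →+ A),
    (∀ r : R, f (r, 0) = lamA r) →
    (∀ (r s : R) (v : V), f (r * s, σ r v) = lamA r * f (s, v)) →
    (∀ (s : R) (v : V) (r : R),
      f (s * r, MulOpposite.op r • v) = f (s, v) * lamA r) →
    ∃! φ : U →+* A, φ.comp lamU = lamA ∧ ∀ m : R × V, φ (jM m) = f m

/-- `(T, lamT, μ)` is the tensor ring `T(V)` of the right `R`-module `V`, viewed
as an `R`-bimodule with left action through `σ`: `μ` is a bimodule map, universal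
among bimodule maps `g : V → A` into `R`-rings. -/
def IsTensorRingOfMod {R V : Type} [Ring R] [AddCommGroup V] [Module Rᵐᵒᵖ V]
    (σ : R →+* Module.End Rᵐᵒᵖ V)
    (T : Type) [Ring T] (lamT : R →+* T) (μ : V →+ T) : Prop :=
  (∀ (r : R) (v : V), μ (σ r v) = lamT r * μ v) ∧
  (∀ (r : R) (v : V), μ (MulOpposite.op r • v) = μ v * lamT r) ∧
  ∀ (A : Type) [Ring A], ∀ (lamA : R →+* A) (g : V →+ A),
    (∀ (r : R) (v : V), g (σ r v) = lamA r * g v) →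
    (∀ (r : R) (v : V), g (MulOpposite.op r • v) = g v * lamA r) →
    ∃! φ : T →+* A, φ.comp lamT = lamA ∧ ∀ v : V, φ (μ v) = g v

/-!
Both `U(M, ι)` and `T(V)` represent the same functor on `R`-rings `A`: a bimodule map
`f : R ⊕ V → A` with `f ∘ ι = λ_A` is the same thing as a bimodule map `g : V → A`, via
`f ↦ f(0, ·)` and `g ↦ (s, v) ↦ λ_A s + g v`. This uses that the derivation is zero, so that
`V ⊆ M` is a sub-bimodule. The two universal lifts are therefore mutually inverse.
-/

section RankOneExt

variable {R V : Type} [Ring R] [AddCommGroup V] [Module Rᵐᵒᵖ V]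
  (σ : R →+* Module.End Rᵐᵒᵖ V)

def IsRankOneExtMap {A : Type} [Ring A] (lamA : R →+* A) (f : R × V →+ A) : Prop :=
  (∀ r : R, f (r, 0) = lamA r) ∧
  (∀ (r s : R) (v : V), f (r * s, σ r v) = lamA r * f (s, v)) ∧
  (∀ (s : R) (v : V) (r : R), f (s * r, MulOpposite.op r • v) = f (s, v) * lamA r)

def IsSigmaBimoduleMap {A : Type} [Ring A] (lamA : R →+* A) (g : V →+ A) : Prop :=
  (∀ (r : R) (v : V), g (σ r v) = lamA r * g v) ∧
  (∀ (r : R) (v : V), g (MulOpposite.op r • v) = g v * lamA r)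

variable {σ}

theorem IsSigmaBimoduleMap.isRankOneExtMap_coprod {A : Type} [Ring A] {lamA : R →+* A}
    {g : V →+ A} (hg : IsSigmaBimoduleMap σ lamA g) :
    IsRankOneExtMap σ lamA ((lamA : R →+ A).coprod g) := by
  refine ⟨fun r => ?_, fun r s v => ?_, fun s v r => ?_⟩ <;>
    simp only [AddMonoidHom.coprod_apply, AddMonoidHom.coe_coe, map_mul, map_zero, add_zero,
      hg.1, hg.2, mul_add, add_mul]

theorem IsRankOneExtMap.isSigmaBimoduleMap_comp_inr {A : Type} [Ring A] {lamA : R →+* A}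
    {f : R × V →+ A} (hf : IsRankOneExtMap σ lamA f) :
    IsSigmaBimoduleMap σ lamA (f.comp (AddMonoidHom.inr R V)) := by
  constructor
  · intro r v
    simpa using hf.2.1 r 0 v
  · intro r v
    simpa using hf.2.2 0 v r

theorem IsRankOneExtMap.coprod_comp_inr {A : Type} [Ring A] {lamA : R →+* A}
    {f : R × V →+ A} (hf : IsRankOneExtMap σ lamA f) :
    (lamA : R →+ A).coprod (f.comp (AddMonoidHom.inr R V)) = f := by
  have hinl : f.comp (AddMonoidHom.inl R V) = lamA := AddMonoidHom.ext hf.1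
  rw [← hinl, AddMonoidHom.coprod_unique]

namespace IsUnivOnRankOneExt

variable {U : Type} [Ring U] {lamU : R →+* U} {jM : R × V →+ U}

theorem isRankOneExtMap (hU : IsUnivOnRankOneExt σ U lamU jM) :
    IsRankOneExtMap σ lamU jM :=
  ⟨hU.1, hU.2.1, hU.2.2.1⟩

theorem exists_lift (hU : IsUnivOnRankOneExt σ U lamU jM) {A : Type} [Ring A]
    {lamA : R →+* A} {f : R × V →+ A} (hf : IsRankOneExtMap σ lamA f) :
    ∃ φ : U →+* A, φ.comp lamU = lamA ∧ ∀ m : R × V, φ (jM m) = f m :=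
  (hU.2.2.2 A lamA f hf.1 hf.2.1 hf.2.2).exists

theorem eq_id (hU : IsUnivOnRankOneExt σ U lamU jM) {φ : U →+* U}
    (hlam : φ.comp lamU = lamU) (hj : ∀ m : R × V, φ (jM m) = jM m) :
    φ = RingHom.id U :=
  (hU.2.2.2 U lamU jM hU.1 hU.2.1 hU.2.2.1).unique ⟨hlam, hj⟩ ⟨lamU.id_comp, fun _ => rfl⟩

end IsUnivOnRankOneExt

namespace IsTensorRingOfMod

variable {T : Type} [Ring T] {lamT : R →+* T} {μ : V →+ T}

theorem isSigmaBimoduleMap (hT : IsTensorRingOfMod σ T lamT μ) :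
    IsSigmaBimoduleMap σ lamT μ :=
  ⟨hT.1, hT.2.1⟩

theorem exists_lift (hT : IsTensorRingOfMod σ T lamT μ) {A : Type} [Ring A]
    {lamA : R →+* A} {g : V →+ A} (hg : IsSigmaBimoduleMap σ lamA g) :
    ∃ φ : T →+* A, φ.comp lamT = lamA ∧ ∀ v : V, φ (μ v) = g v :=
  (hT.2.2 A lamA g hg.1 hg.2).exists

theorem eq_id (hT : IsTensorRingOfMod σ T lamT μ) {φ : T →+* T}
    (hlam : φ.comp lamT = lamT) (hμ : ∀ v : V, φ (μ v) = μ v) :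
    φ = RingHom.id T :=
  (hT.2.2 T lamT μ hT.1 hT.2.1).unique ⟨hlam, hμ⟩ ⟨lamT.id_comp, fun _ => rfl⟩

end IsTensorRingOfMod

end RankOneExt

/-- For a right `R`-module `V`, a ring homomorphism `σ : R → End(V_R)` and the
rank-1 bimodule extension `M = R ⊕ V` defined by `σ` and the zero derivation, the
universal `R`-ring `U(M, ι)` on `M` along the inclusion `ι : R → M` is isomorphic
as an `R`-ring to the tensor ring `T(V)`. -/
theorem univRankOneExt_iso_tensorRing {R V : Type} [Ring R] [AddCommGroup V]
    [Module Rᵐᵒᵖ V] (σ : R →+* Module.End Rᵐᵒᵖ V)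
    (U : Type) [Ring U] (lamU : R →+* U) (jM : R × V →+ U)
    (hU : IsUnivOnRankOneExt σ U lamU jM)
    (T : Type) [Ring T] (lamT : R →+* T) (μ : V →+ T)
    (hT : IsTensorRingOfMod σ T lamT μ) :
    ∃ e : U ≃+* T, (∀ r : R, e (lamU r) = lamT r) ∧
      ∀ (s : R) (v : V), e (jM (s, v)) = lamT s + μ v := by
  obtain ⟨φ, hφlam, hφj⟩ := hU.exists_lift hT.isSigmaBimoduleMap.isRankOneExtMap_coprod
  obtain ⟨ψ, hψlam, hψμ⟩ := hT.exists_lift hU.isRankOneExtMap.isSigmaBimoduleMap_comp_inr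
  have hψφ : ψ.comp φ = RingHom.id U := by
    refine hU.eq_id (by rw [RingHom.comp_assoc, hφlam, hψlam]) fun m => ?_
    conv_rhs => rw [← hU.isRankOneExtMap.coprod_comp_inr]
    simp only [RingHom.coe_comp, Function.comp_apply, hφj, AddMonoidHom.coprod_apply, map_add,
      AddMonoidHom.coe_coe, hψμ, ← RingHom.comp_apply ψ lamT, hψlam]
  have hφψ : φ.comp ψ = RingHom.id T := by
    refine hT.eq_id (by rw [RingHom.comp_assoc, hψlam, hφlam]) fun v => ?_
    simp [hψμ, hφj]
  exact ⟨RingEquiv.ofRingHom φ ψ hφψ hψφ, fun r => congr($hφlam r), fun s v => hφj (s, v)⟩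
end

section
/- Let R be a ring, n ≥ 1, σ: R → Mₙ(R) a ring homomorphism and δ: R → Rⁿ a right σ-derivation. Then the free skew extension R⟨x₁,…,xₙ; σ, δ⟩ is isomorphic as an R-ring to the universal R-ring U(M, ι), where M = R ⊕ V is the rank-1 bimodule extension of the free right R-module V of rank n determined by σ and δ, and ι: R → M is the inclusion. -/
/-- `(U, lamU, jM)` is the universal `R`-ring `U(M, ι)` on the rank-1 bimodule
extension `M = R ⊕ V` of the free right `R`-module `V = Rⁿ` determined by `σ` and
`δ`, along the inclusion `ι : R → M`.  Here the left action is
`r·(s, Σ v_j b_j) = (rs + Σ_j δ_j(r)b_j, Σ_{i,j} v_i σ_{ij}(r)b_j)` and the right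
action is componentwise: `jM` is a bimodule map with `jM∘ι = lamU`, universal
among bimodule maps `f : M → A` into `R`-rings with `f∘ι = lamA`. -/
def IsUnivOnRankOneFree {R : Type} [Ring R] {n : ℕ}
    (σ : R →+* Matrix (Fin n) (Fin n) R) (δ : R → Fin n → R)
    (U : Type) [Ring U] (lamU : R →+* U) (jM : R × (Fin n → R) →+ U) : Prop :=
  (∀ r : R, jM (r, 0) = lamU r) ∧
  (∀ (r s : R) (b : Fin n → R),
    jM (r * s + ∑ k, δ r k * b k, fun i => ∑ k, σ r i k * b k)
      = lamU r * jM (s, b)) ∧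
  (∀ (s : R) (b : Fin n → R) (r : R),
    jM (s * r, fun i => b i * r) = jM (s, b) * lamU r) ∧
  ∀ (A : Type) [Ring A], ∀ (lamA : R →+* A) (f : R × (Fin n → R) →+ A),
    (∀ r : R, f (r, 0) = lamA r) →
    (∀ (r s : R) (b : Fin n → R),
      f (r * s + ∑ k, δ r k * b k, fun i => ∑ k, σ r i k * b k)
        = lamA r * f (s, b)) →
    (∀ (s : R) (b : Fin n → R) (r : R),
      f (s * r, fun i => b i * r) = f (s, b) * lamA r) →
    ∃! φ : U →+* A, φ.comp lamU = lamA ∧ ∀ m, φ (jM m) = f m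

/-!
Both rings are generated over `R` by `n` elements subject to the commutation rule
`r xⱼ = Σᵢ xᵢ σᵢⱼ(r) + δⱼ(r)`. In `U` the elements `Xⱼ = jM (0, eⱼ)` satisfy it and
`jM (s, b) = s + Σᵢ Xᵢ bᵢ`, so left linearity of `jM` is exactly the rule; the rule in `S`
makes `(s, b) ↦ s + Σᵢ xᵢ bᵢ` a bimodule map, whence `φ : U → S`. Conversely, since `S` is
free as a right `R`-module on the monomials, `w(x) a ↦ w(X) a` is a well-defined additive map
`ψ : S → U`; it commutes with left multiplication by the `xᵢ` and, by induction on the length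
of words using the rule in both rings, by `R`, so it is multiplicative. Then `ψ ∘ φ = id` by
the uniqueness in the universal property of `U`, and `φ ∘ ψ = id` because `S` is spanned by
monomials.
-/

open Finset

section RankOne

variable {R : Type} [Ring R] {n : ℕ} {A : Type*} [Ring A]

def SkewCommutes (σ : R →+* Matrix (Fin n) (Fin n) R) (δ : R → Fin n → R)
    (lam : R →+* A) (x : Fin n → A) : Prop :=
  ∀ (r : R) (j : Fin n), lam r * x j = (∑ i, x i * lam (σ r i j)) + lam (δ r j)

/-- Left `R`-linearity of `g : M → A` for the action
`r • (s, b) = (r s + Σₖ δₖ(r) bₖ, σ(r) b)` on `M = R ⊕ Rⁿ`. -/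
def IsLeftSkewLinear (σ : R →+* Matrix (Fin n) (Fin n) R) (δ : R → Fin n → R)
    (lam : R →+* A) (g : R × (Fin n → R) →+ A) : Prop :=
  ∀ (r s : R) (b : Fin n → R),
    g (r * s + ∑ k, δ r k * b k, fun i => ∑ k, σ r i k * b k) = lam r * g (s, b)

def rankOneLift (lam : R →+* A) (x : Fin n → A) : R × (Fin n → R) →+ A :=
  AddMonoidHom.mk' (fun m => lam m.1 + ∑ i, x i * lam (m.2 i)) fun m m' => by
    simp only [Prod.fst_add, Prod.snd_add, Pi.add_apply, map_add, mul_add, sum_add_distrib]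
    abel

theorem SkewCommutes.lam_mul_x_mul {σ : R →+* Matrix (Fin n) (Fin n) R} {δ : R → Fin n → R}
    {lam : R →+* A} {x : Fin n → A} (h : SkewCommutes σ δ lam x) (a : R) (j : Fin n) (t : A) :
    lam a * (x j * t) = (∑ i, x i * (lam (σ a i j) * t)) + lam (δ a j) * t := by
  rw [← mul_assoc, h a j, add_mul, sum_mul]
  simp only [mul_assoc]

variable (lam : R →+* A) (x : Fin n → A)

@[simp]
theorem rankOneLift_apply (m : R × (Fin n → R)) :
    rankOneLift lam x m = lam m.1 + ∑ i, x i * lam (m.2 i) := rfl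

theorem rankOneLift_inl (r : R) : rankOneLift lam x (r, 0) = lam r := by
  simp

theorem rankOneLift_single_one (j : Fin n) : rankOneLift lam x (0, Pi.single j 1) = x j := by
  simp [Pi.single_apply]

theorem rankOneLift_mul_right (s : R) (b : Fin n → R) (r : R) :
    rankOneLift lam x (s * r, fun i => b i * r) = rankOneLift lam x (s, b) * lam r := by
  simp only [rankOneLift_apply, map_mul, add_mul, sum_mul, mul_assoc]

theorem map_rankOneLift {B : Type*} [Ring B] (f : A →+* B) (m : R × (Fin n → R)) :
    f (rankOneLift lam x m) = rankOneLift (f.comp lam) (f ∘ x) m := by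
  simp

theorem isLeftSkewLinear_rankOneLift_iff (σ : R →+* Matrix (Fin n) (Fin n) R)
    (δ : R → Fin n → R) :
    IsLeftSkewLinear σ δ lam (rankOneLift lam x) ↔ SkewCommutes σ δ lam x := by
  constructor
  · intro h r j
    simpa [Pi.single_apply, add_comm, eq_comm] using h r 0 (Pi.single j 1)
  · intro h r s b
    unfold SkewCommutes at h
    simp only [rankOneLift_apply, map_add, map_mul, map_sum, mul_add, mul_sum, ← mul_assoc, h,
      add_mul, sum_mul, sum_add_distrib]
    rw [sum_comm]
    abel

theorem eq_rankOneLift {g : R × (Fin n → R) →+ A} (hinl : ∀ r, g (r, 0) = lam r)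
    (hright : ∀ (s : R) (b : Fin n → R) (r : R), g (s * r, fun i => b i * r) = g (s, b) * lam r) :
    g = rankOneLift lam fun j => g (0, Pi.single j 1) := by
  ext m
  obtain ⟨s, b⟩ := m
  have hsplit : ((s, b) : R × (Fin n → R))
      = (s, 0) + ∑ j, (0 * b j, fun i => (Pi.single j 1 : Fin n → R) i * b j) := by
    ext <;> simp [Prod.fst_sum, Prod.snd_sum, Pi.single_apply]
  rw [rankOneLift_apply]
  nth_rewrite 1 [hsplit]
  simp only [map_add, map_sum, hinl, hright]

end RankOne

section Monomials

variable {R : Type} [Ring R] {ι : Type*} {S A : Type*} [Ring S] [Ring A]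

noncomputable def monomialSum (lam : R →+* S) (x : ι → S) : (FreeMonoid ι →₀ R) →+ S :=
  Finsupp.liftAddHom fun w => (AddMonoidHom.mulLeft (FreeMonoid.lift x w)).comp lam.toAddMonoidHom

theorem coe_monomialSum (lam : R →+* S) (x : ι → S) :
    ⇑(monomialSum lam x) = fun c => c.sum fun w a => FreeMonoid.lift x w * lam a :=
  funext fun c => Finsupp.liftAddHom_apply _ c

@[simp]
theorem monomialSum_single (lam : R →+* S) (x : ι → S) (w : FreeMonoid ι) (a : R) :
    monomialSum lam x (Finsupp.single w a) = FreeMonoid.lift x w * lam a := by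
  simp [monomialSum]

variable {lam : R →+* S} {x : ι → S}

theorem addMonoidHom_ext_of_monomialSum_surjective (hB : Function.Surjective (monomialSum lam x))
    {g h : S →+ A}
    (hgh : ∀ w a, g (FreeMonoid.lift x w * lam a) = h (FreeMonoid.lift x w * lam a)) :
    g = h := by
  have hcomp : g.comp (monomialSum lam x) = h.comp (monomialSum lam x) :=
    Finsupp.addHom_ext fun w a => by simpa using hgh w a
  ext s
  obtain ⟨c, rfl⟩ := hB s
  exact DFunLike.congr_fun hcomp c

theorem ringHom_ext_of_monomialSum_surjective (hB : Function.Surjective (monomialSum lam x))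
    {f g : S →+* A} (hlam : f.comp lam = g.comp lam) (hx : ∀ i, f (x i) = g (x i)) : f = g := by
  refine RingHom.coe_addMonoidHom_injective ?_
  refine addMonoidHom_ext_of_monomialSum_surjective hB fun w a => ?_
  simp only [AddMonoidHom.coe_coe, map_mul, ← RingHom.comp_apply, hlam]
  have hfx : (f : S →* A) ∘ x = (g : S →* A) ∘ x := funext hx
  rw [← MonoidHom.coe_coe f, ← MonoidHom.coe_coe g, FreeMonoid.hom_map_lift,
    FreeMonoid.hom_map_lift, hfx]

end Monomials

section Transfer

variable {R : Type} [Ring R] {n : ℕ} {S T : Type*} [Ring S] [Ring T]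
  {σ : R →+* Matrix (Fin n) (Fin n) R} {δ : R → Fin n → R} {lam : R →+* S} {x : Fin n → S}
  (hB : Function.Bijective (monomialSum lam x)) (lamT : R →+* T) (X : Fin n → T)

noncomputable def transferHom : S →+ T :=
  (monomialSum lamT X).comp (AddEquiv.ofBijective (monomialSum lam x) hB).symm.toAddMonoidHom

theorem transferHom_monomialSum (c : FreeMonoid (Fin n) →₀ R) :
    transferHom hB lamT X (monomialSum lam x c) = monomialSum lamT X c :=
  congrArg (monomialSum lamT X) ((AddEquiv.ofBijective _ hB).symm_apply_apply c)

theorem transferHom_monomial (w : FreeMonoid (Fin n)) (a : R) :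
    transferHom hB lamT X (FreeMonoid.lift x w * lam a) = FreeMonoid.lift X w * lamT a := by
  simpa using transferHom_monomialSum hB lamT X (Finsupp.single w a)

theorem transferHom_lam (a : R) : transferHom hB lamT X (lam a) = lamT a := by
  simpa using transferHom_monomial hB lamT X 1 a

theorem transferHom_x (i : Fin n) : transferHom hB lamT X (x i) = X i := by
  simpa using transferHom_monomial hB lamT X (FreeMonoid.of i) 1

theorem transferHom_word_mul (w : FreeMonoid (Fin n)) (t : S) :
    transferHom hB lamT X (FreeMonoid.lift x w * t)
      = FreeMonoid.lift X w * transferHom hB lamT X t := by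
  have hext : (transferHom hB lamT X).comp (AddMonoidHom.mulLeft (FreeMonoid.lift x w))
      = (AddMonoidHom.mulLeft (FreeMonoid.lift X w)).comp (transferHom hB lamT X) :=
    addMonoidHom_ext_of_monomialSum_surjective hB.2 fun w' a => by
      simp only [AddMonoidHom.comp_apply, AddMonoidHom.coe_mulLeft, ← mul_assoc, ← map_mul,
        transferHom_monomial]
  exact DFunLike.congr_fun hext t

variable {lamT X} (hS : SkewCommutes σ δ lam x) (hT : SkewCommutes σ δ lamT X)
include hS hT

theorem transferHom_lam_mul_monomial (w : FreeMonoid (Fin n)) (a b : R) :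
    transferHom hB lamT X (lam a * (FreeMonoid.lift x w * lam b))
      = lamT a * (FreeMonoid.lift X w * lamT b) := by
  induction w using FreeMonoid.inductionOn' generalizing a with
  | one => simpa [← map_mul] using transferHom_monomial hB lamT X 1 (a * b)
  | of_mul j w ih =>
    have hx (i : Fin n) (t : S) :
        transferHom hB lamT X (x i * t) = X i * transferHom hB lamT X t := by
      simpa using transferHom_word_mul hB lamT X (FreeMonoid.of i) t
    simp only [map_mul (FreeMonoid.lift _), FreeMonoid.lift_eval_of, mul_assoc, hS.lam_mul_x_mul,
      hT.lam_mul_x_mul, map_add, map_sum, hx, ih]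

theorem transferHom_lam_mul (a : R) (t : S) :
    transferHom hB lamT X (lam a * t) = lamT a * transferHom hB lamT X t := by
  have hext : (transferHom hB lamT X).comp (AddMonoidHom.mulLeft (lam a))
      = (AddMonoidHom.mulLeft (lamT a)).comp (transferHom hB lamT X) :=
    addMonoidHom_ext_of_monomialSum_surjective hB.2 fun w b => by
      simp only [AddMonoidHom.comp_apply, AddMonoidHom.coe_mulLeft, transferHom_monomial,
        transferHom_lam_mul_monomial hB hS hT]
  exact DFunLike.congr_fun hext t

theorem transferHom_mul (s t : S) :
    transferHom hB lamT X (s * t) = transferHom hB lamT X s * transferHom hB lamT X t := by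
  have hext : (transferHom hB lamT X).comp (AddMonoidHom.mulRight t)
      = (AddMonoidHom.mulRight (transferHom hB lamT X t)).comp (transferHom hB lamT X) :=
    addMonoidHom_ext_of_monomialSum_surjective hB.2 fun w a => by
      simp only [AddMonoidHom.comp_apply, AddMonoidHom.coe_mulRight, mul_assoc,
        transferHom_word_mul, transferHom_lam_mul hB hS hT, transferHom_lam]
  exact DFunLike.congr_fun hext s

noncomputable def skewLift : S →+* T :=
  { transferHom hB lamT X with
    map_one' := by simpa using transferHom_lam hB lamT X 1
    map_mul' := transferHom_mul hB hS hT }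

theorem skewLift_comp_lam : (skewLift hB hS hT).comp lam = lamT := by
  ext a
  exact transferHom_lam hB lamT X a

theorem skewLift_comp_x : skewLift hB hS hT ∘ x = X := by
  ext i
  exact transferHom_x hB lamT X i

end Transfer

theorem skewFreeExt_iso_univRankOne_general {R : Type} [Ring R] {n : ℕ}
    (σ : R →+* Matrix (Fin n) (Fin n) R) (δ : R → Fin n → R)
    (S : Type) [Ring S] (lam : R →+* S) (x : Fin n → S)
    (hS : IsSkewFreeExt σ δ S lam x)
    (U : Type) [Ring U] (lamU : R →+* U) (jM : R × (Fin n → R) →+ U)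
    (hU : IsUnivOnRankOneFree σ δ U lamU jM) :
    ∃ e : U ≃+* S, (∀ r : R, e (lamU r) = lam r) ∧
      ∀ (s : R) (b : Fin n → R),
        e (jM (s, b)) = lam s + ∑ i, x i * lam (b i) := by
  obtain ⟨-, hB, hSskew⟩ := hS
  rw [← coe_monomialSum] at hB
  obtain ⟨hUinl, hUleft, hUright, hUuniv⟩ := hU
  set X : Fin n → U := fun j => jM (0, Pi.single j 1)
  have hjM : jM = rankOneLift lamU X := eq_rankOneLift lamU hUinl hUright
  have hUskew : SkewCommutes σ δ lamU X :=
    (isLeftSkewLinear_rankOneLift_iff lamU X σ δ).1 (hjM ▸ hUleft)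
  obtain ⟨ψ, hψlam, hψx⟩ : ∃ ψ : S →+* U, ψ.comp lam = lamU ∧ ψ ∘ x = X :=
    ⟨skewLift hB hSskew hUskew, skewLift_comp_lam hB hSskew hUskew,
      skewLift_comp_x hB hSskew hUskew⟩
  obtain ⟨φ, ⟨hφlam, hφjM⟩, -⟩ := hUuniv S lam (rankOneLift lam x) (rankOneLift_inl lam x)
    ((isLeftSkewLinear_rankOneLift_iff lam x σ δ).2 hSskew) (rankOneLift_mul_right lam x)
  have hψφ : ψ.comp φ = RingHom.id U := by
    refine (hUuniv U lamU jM hUinl hUleft hUright).unique ⟨?_, fun m => ?_⟩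
      ⟨RingHom.id_comp lamU, fun m => rfl⟩
    · rw [RingHom.comp_assoc, hφlam, hψlam]
    · rw [RingHom.comp_apply, hφjM, map_rankOneLift, hψlam, hψx, ← hjM]
  have hφψ : φ.comp ψ = RingHom.id S :=
    ringHom_ext_of_monomialSum_surjective hB.2
      (by rw [RingHom.comp_assoc, hψlam, hφlam, RingHom.id_comp])
      fun i => by
        rw [RingHom.comp_apply, ← Function.comp_apply (f := ψ), hψx]
        exact (hφjM _).trans (rankOneLift_single_one lam x i)
  exact ⟨RingEquiv.ofRingHom φ ψ hφψ hψφ, RingHom.congr_fun hφlam, fun s b => hφjM (s, b)⟩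

/-- The `(σ,δ)`-free skew extension of `R` is isomorphic as an `R`-ring to the
universal `R`-ring `U(M, ι)` on the rank-1 bimodule extension `M = R ⊕ Rⁿ`
determined by `σ` and `δ`, the isomorphism carrying `jM(s, b)` to
`s + Σᵢ xᵢ bᵢ`. -/
theorem skewFreeExt_iso_univRankOne {R : Type} [Ring R] {n : ℕ}
    (σ : R →+* Matrix (Fin n) (Fin n) R) (δ : R → Fin n → R)
    (hδ : IsRightSigmaDeriv σ δ)
    (S : Type) [Ring S] (lam : R →+* S) (x : Fin n → S)
    (hS : IsSkewFreeExt σ δ S lam x)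
    (U : Type) [Ring U] (lamU : R →+* U) (jM : R × (Fin n → R) →+ U)
    (hU : IsUnivOnRankOneFree σ δ U lamU jM) :
    ∃ e : U ≃+* S, (∀ r : R, e (lamU r) = lam r) ∧
      ∀ (s : R) (b : Fin n → R),
        e (jM (s, b)) = lam s + ∑ i, x i * lam (b i) :=
  skewFreeExt_iso_univRankOne_general σ δ S lam x hS U lamU jM hU
end

section
/- Let R be a domain and σ: R → Mₙ(R) a ring homomorphism such that σ(a) is upper triangular with all diagonal entries σ_{ii}(a) nonzero, for every nonzero a ∈ R. Then σ is megainjective. -/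
/-- Index type for the `r`-fold iterate `σ^{(r)}`: `n^r` indices, realized as
`r`-tuples (words of length `r` in `n` letters). -/
def iterIndex (n : ℕ) : ℕ → Type
  | 0 => Unit
  | r + 1 => iterIndex n r × Fin n

instance iterIndexFintype (n : ℕ) : ∀ r : ℕ, Fintype (iterIndex n r)
  | 0 => inferInstanceAs (Fintype Unit)
  | r + 1 => letI := iterIndexFintype n r
      inferInstanceAs (Fintype (iterIndex n r × Fin n))

instance iterIndexDecEq (n : ℕ) : ∀ r : ℕ, DecidableEq (iterIndex n r)
  | 0 => inferInstanceAs (DecidableEq Unit)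
  | r + 1 => letI := iterIndexDecEq n r
      inferInstanceAs (DecidableEq (iterIndex n r × Fin n))

/-- The iterate `σ^{(r)} : R → M_{n^r}(R)`, defined by `σ^{(1)} = σ` (up to the
identification `iterIndex n 1 ≃ Fin n`) and `σ^{(r+1)}(a)` obtained by applying `σ`
entrywise to `σ^{(r)}(a)`. -/
def sigmaIter {R : Type} [Ring R] {n : ℕ} (σ : R →+* Matrix (Fin n) (Fin n) R) :
    ∀ r : ℕ, R → Matrix (iterIndex n r) (iterIndex n r) R
  | 0 => fun a _ _ => a
  | r + 1 => fun a p q => σ (sigmaIter σ r a p.1 q.1) p.2 q.2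

/-- `σ` is megainjective: for every nonzero `a ∈ R` and every `r ≥ 1`, the columns
of `σ^{(r)}(a)` are right `R`-linearly independent (equivalently, `σ^{(r)}(a)` is
neither zero nor a left zero divisor in `M_{n^r}(R)`). -/
def Megainjective {R : Type} [Ring R] {n : ℕ}
    (σ : R →+* Matrix (Fin n) (Fin n) R) : Prop :=
  ∀ a : R, a ≠ 0 → ∀ r : ℕ, 1 ≤ r → ∀ b : iterIndex n r → R,
    (sigmaIter σ r a).mulVec b = 0 → b = 0

/-!
Order the index words of `σ^{(r)}` lexicographically. Since `σ 0 = 0` and every `σ x` is upper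
triangular, an induction on `r` shows that `σ^{(r)}(a)` is upper triangular for this order, and its
diagonal entries are iterated diagonal entries `σ_{ii}(σ_{jj}(⋯ a))`, hence nonzero when `a ≠ 0`.
Over a domain such a matrix kills no nonzero vector: at the last nonzero coordinate of the vector,
the corresponding row of the product is a product of two nonzero elements.
-/

instance iterIndexLinearOrder (n : ℕ) : ∀ r : ℕ, LinearOrder (iterIndex n r)
  | 0 => inferInstanceAs (LinearOrder Unit)
  | r + 1 => @Prod.Lex.instLinearOrder (iterIndex n r) (Fin n) (iterIndexLinearOrder n r) _

theorem iterIndex_succ_lt_iff {n r : ℕ} {p q : iterIndex n (r + 1)} :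
    p < q ↔ p.1 < q.1 ∨ p.1 = q.1 ∧ p.2 < q.2 :=
  Prod.Lex.toLex_lt_toLex (α := iterIndex n r) (β := Fin n)

theorem Matrix.BlockTriangular.eq_zero_of_mulVec_eq_zero {ι R : Type*} [Fintype ι]
    [LinearOrder ι] [Ring R] [NoZeroDivisors R] {M : Matrix ι ι R}
    (hM : M.BlockTriangular id) (hdiag : ∀ i, M i i ≠ 0) {v : ι → R} (hv : M.mulVec v = 0) :
    v = 0 := by
  classical
  by_contra hv0
  have hsupp : (Finset.univ.filter (v · ≠ 0)).Nonempty := by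
    simpa [Finset.filter_nonempty_iff, funext_iff] using hv0
  obtain ⟨i, hvi, hmax⟩ := Finset.exists_max_image _ id hsupp
  replace hvi : v i ≠ 0 := (Finset.mem_filter.mp hvi).2
  have hrow : (M.mulVec v) i = M i i * v i := by
    refine Finset.sum_eq_single i (fun j _ hji => ?_) (by simp)
    by_cases hvj : v j = 0
    · exact mul_eq_zero_of_right _ hvj
    · exact mul_eq_zero_of_left (hM (lt_of_le_of_ne (hmax j (by simpa using hvj)) hji)) _
  exact mul_ne_zero (hdiag i) hvi (hrow ▸ congrFun hv i)

section

variable {R : Type} [Ring R] {n : ℕ} (σ : R →+* Matrix (Fin n) (Fin n) R)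

theorem blockTriangular_sigmaIter (hσ : ∀ x, (σ x).BlockTriangular id) (a : R) :
    ∀ r, (sigmaIter σ r a).BlockTriangular id
  | 0 => fun () () h => (lt_irrefl _ h).elim
  | r + 1 => fun p q (h : q < p) => by
    rcases iterIndex_succ_lt_iff.mp h with h | ⟨-, h₂⟩
    · change σ (sigmaIter σ r a p.1 q.1) p.2 q.2 = 0
      rw [blockTriangular_sigmaIter hσ a r h, map_zero, Matrix.zero_apply]
    · exact hσ _ h₂

theorem sigmaIter_apply_self_ne_zero (hdiag : ∀ x ≠ 0, ∀ i, σ x i i ≠ 0) {a : R} (ha : a ≠ 0) :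
    ∀ r (p : iterIndex n r), sigmaIter σ r a p p ≠ 0
  | 0, _ => ha
  | r + 1, p => hdiag _ (sigmaIter_apply_self_ne_zero hdiag ha r p.1) p.2

end

/-- If `R` is a domain and `σ(a)` is upper triangular with all diagonal entries
nonzero, for every nonzero `a ∈ R`, then `σ` is megainjective. -/
theorem megainjective_of_upperTriangular {R : Type} [Ring R] [IsDomain R] {n : ℕ}
    (σ : R →+* Matrix (Fin n) (Fin n) R)
    (htri : ∀ a : R, a ≠ 0 →
      (∀ i j : Fin n, j < i → σ a i j = 0) ∧ ∀ i : Fin n, σ a i i ≠ 0) :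
    Megainjective σ := by
  have hσ : ∀ x, (σ x).BlockTriangular id := fun x => by
    by_cases hx : x = 0
    · rw [hx, map_zero]
      exact Matrix.blockTriangular_zero
    · exact fun i j h => (htri x hx).1 i j h
  intro a ha r _ b hb
  exact (blockTriangular_sigmaIter σ hσ a r).eq_zero_of_mulVec_eq_zero
    (sigmaIter_apply_self_ne_zero σ (fun x hx => (htri x hx).2) ha r) hb
end

section
/- Let R be a right Ore domain and σ: R → Mₙ(R) a ring homomorphism such that for every nonzero a ∈ R the columns of σ(a) are right R-linearly independent. Then σ is megainjective, i.e., for every r ≥ 1 and nonzero a ∈ R, the columns of the iterate σ^{(r)}(a) ∈ M_{n^r}(R) are right R-linearly independent. -/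
/-!
Over a right Ore domain a homogeneous linear system with more unknowns than equations has a
nonzero solution (Gaussian elimination, with the Ore condition supplying common right
multiples). Hence a square matrix `M` with right independent columns satisfies `M N = diag d`
with all `d i ≠ 0`, and `A` has right independent columns whenever `A B` does. Now
`σ^{(r+1)}(a)` is `σ` applied entrywise to `σ^{(r)}(a)`, so `σ^{(r)}(a) N = diag d` gives
`σ^{(r+1)}(a) · σ(N) = diag (σ (d i))`, a block diagonal matrix whose blocks have independent
columns by hypothesis; induction on `r` finishes the proof.
-/

open Matrix
open scoped RightActions

def RightOreCondition (R : Type*) [Ring R] : Prop :=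
  ∀ a b : R, a ≠ 0 → b ≠ 0 → ∃ u v : R, a * u = b * v ∧ a * u ≠ 0

section Ring

variable {R : Type*} [Ring R]

theorem mulVec_dite_eq_mulVec_sub_mul {ι κ : Type*} [Fintype κ] [DecidableEq κ]
    (M : Matrix ι κ R) (k₀ : κ) (p q : κ → R) (c : {k // k ≠ k₀} → R) :
    M *ᵥ (fun k => if h : k = k₀ then ∑ k' : {k // k ≠ k₀}, p k' * c k'
      else -(q k * c ⟨k, h⟩)) =
      of (fun i (k : {k // k ≠ k₀}) => M i k₀ * p k - M i k * q k) *ᵥ c := by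
  funext i
  rw [mulVec, dotProduct, Fintype.sum_eq_add_sum_subtype_ne _ k₀, dif_pos rfl]
  have hne : ∀ k : {k // k ≠ k₀}, ((k : κ) = k₀) = False := fun k => eq_false k.2
  simp only [hne, dite_false, mulVec, dotProduct, of_apply, Finset.mul_sum, sub_mul,
    Finset.sum_sub_distrib, mul_neg, mul_assoc, Finset.sum_neg_distrib, ← sub_eq_add_neg]

theorem comp_diagonal_mulVec {ι κ : Type*} [Fintype ι] [DecidableEq ι] [Fintype κ]
    (D : ι → Matrix κ κ R) (x : ι × κ → R) :
    comp ι ι κ κ R (diagonal D) *ᵥ x = fun ik => (D ik.1 *ᵥ fun k => x (ik.1, k)) ik.2 := by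
  ext ⟨i, k⟩
  rw [mulVec, dotProduct, Fintype.sum_prod_type, Finset.sum_eq_single i
    (fun j _ hji => by simp [diagonal_apply_ne _ hji.symm]) (by simp)]
  simp [mulVec, dotProduct]

theorem eq_zero_of_comp_diagonal_mulVec_eq_zero {ι κ : Type*} [Fintype ι] [DecidableEq ι]
    [Fintype κ] {D : ι → Matrix κ κ R} (hD : ∀ i x, D i *ᵥ x = 0 → x = 0) {x : ι × κ → R}
    (hx : comp ι ι κ κ R (diagonal D) *ᵥ x = 0) : x = 0 := by
  rw [comp_diagonal_mulVec] at hx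
  funext ⟨i, k⟩
  exact congrFun (hD i (fun k => x (i, k)) (funext fun k => congrFun hx (i, k))) k

end Ring

section OreDomain

variable {R : Type*} [Ring R] [IsDomain R]

theorem RightOreCondition.exists_mul_eq_mul_ne_zero (hR : RightOreCondition R) {a : R}
    (ha : a ≠ 0) (b : R) : ∃ p q : R, a * p = b * q ∧ q ≠ 0 := by
  rcases eq_or_ne b 0 with rfl | hb
  · exact ⟨0, 1, by simp, one_ne_zero⟩
  obtain ⟨u, v, huv, hu⟩ := hR a b ha hb
  exact ⟨u, v, huv, by rintro rfl; simp [huv] at hu⟩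

theorem RightOreCondition.exists_forall_mul_eq_mul (hR : RightOreCondition R) {κ : Type*}
    [Nonempty κ] (v : κ → R) :
    ∃ (k₀ : κ) (p q : κ → R), (∀ k, v k₀ * p k = v k * q k) ∧ ∀ k, q k ≠ 0 := by
  by_cases hv : v = 0
  · exact ⟨Classical.arbitrary κ, 0, 1, by simp [hv], fun _ => one_ne_zero⟩
  obtain ⟨k₀, hk₀⟩ := Function.ne_iff.mp hv
  choose p q hpq hq using fun k => hR.exists_mul_eq_mul_ne_zero hk₀ (v k)
  exact ⟨k₀, p, q, hpq, hq⟩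

/-- Gaussian elimination: pivoting on row `i₀`, the columns `k ≠ k₀` are replaced by
`M_{k₀} p k - M_k q k`, which vanish in row `i₀`, and induction applies to the other rows. -/
theorem exists_mulVec_eq_zero_of_card_lt (hR : RightOreCondition R) {ι κ : Type*}
    [Fintype ι] [Fintype κ] (M : Matrix ι κ R) (hcard : Fintype.card ι < Fintype.card κ) :
    ∃ c ≠ 0, M *ᵥ c = 0 := by
  classical
  induction hm : Fintype.card ι generalizing ι κ with
  | zero =>
    have : IsEmpty ι := Fintype.card_eq_zero_iff.mp hm
    have : Nonempty κ := Fintype.card_pos_iff.mp (by omega)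
    exact ⟨1, one_ne_zero, Subsingleton.elim _ _⟩
  | succ m ih =>
    obtain ⟨i₀⟩ : Nonempty ι := Fintype.card_pos_iff.mp (by omega)
    have : Nonempty κ := Fintype.card_pos_iff.mp (by omega)
    obtain ⟨k₀, p, q, hpq, hq⟩ := hR.exists_forall_mul_eq_mul (M i₀)
    let M' : Matrix ι {k // k ≠ k₀} R := of fun i k => M i k₀ * p k - M i k * q k
    obtain ⟨c', hc', hM'c'⟩ := ih (M'.submatrix ((↑) : {i // i ≠ i₀} → ι) id)
      (by simp only [Fintype.card_subtype_compl, Fintype.card_unique]; omega)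
      (by simp only [Fintype.card_subtype_compl, Fintype.card_unique]; omega)
    refine ⟨fun k => if h : k = k₀ then ∑ k' : {k // k ≠ k₀}, p k' * c' k'
      else -(q k * c' ⟨k, h⟩), ?_, ?_⟩
    · obtain ⟨k, hk⟩ := Function.ne_iff.mp hc'
      refine Function.ne_iff.mpr ⟨k, ?_⟩
      simpa [k.2] using mul_ne_zero (hq k) hk
    · rw [mulVec_dite_eq_mulVec_sub_mul]
      funext i
      by_cases hi : i = i₀
      · subst hi
        exact Finset.sum_eq_zero fun k _ => by simp [hpq]
      · exact congrFun hM'c' ⟨i, hi⟩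

theorem exists_mulVec_eq_op_smul (hR : RightOreCondition R) {ι : Type*} [Fintype ι]
    {M : Matrix ι ι R} (hM : ∀ x, M *ᵥ x = 0 → x = 0) (v : ι → R) :
    ∃ (x : ι → R) (s : R), s ≠ 0 ∧ M *ᵥ x = v <• s := by
  obtain ⟨c, hc, hMc⟩ := exists_mulVec_eq_zero_of_card_lt hR (fromCols M (replicateCol Unit v))
    (by simp)
  have hcol : replicateCol Unit v *ᵥ (c ∘ Sum.inr) = v <• c (Sum.inr ()) := by
    ext i; simp [mulVec, dotProduct]
  rw [fromCols_mulVec, hcol] at hMc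
  have hs : c (Sum.inr ()) ≠ 0 := by
    intro h0
    have hx : c ∘ Sum.inl = 0 := hM _ (by simpa [h0] using hMc)
    exact hc (funext fun | .inl i => congrFun hx i | .inr () => h0)
  refine ⟨-(c ∘ Sum.inl), c (Sum.inr ()), hs, ?_⟩
  rw [mulVec_neg]
  exact neg_eq_of_add_eq_zero_right hMc

theorem exists_mul_eq_diagonal (hR : RightOreCondition R) {ι : Type*} [Fintype ι]
    [DecidableEq ι] {M : Matrix ι ι R} (hM : ∀ x, M *ᵥ x = 0 → x = 0) :
    ∃ (N : Matrix ι ι R) (d : ι → R), (∀ i, d i ≠ 0) ∧ M * N = diagonal d := by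
  choose x d hd hx using fun i => exists_mulVec_eq_op_smul hR hM (Pi.single i 1)
  refine ⟨of fun j i => x i j, d, hd, ext fun j i => ?_⟩
  have := congrFun (hx i) j
  rcases eq_or_ne j i with rfl | hji <;>
    simpa [mul_apply, mulVec, dotProduct, Pi.single_apply, *] using this

theorem eq_zero_of_mulVec_eq_zero_of_mul_eq (hR : RightOreCondition R) {ι : Type*} [Fintype ι]
    {A B D : Matrix ι ι R} (hAB : A * B = D) (hD : ∀ x, D *ᵥ x = 0 → x = 0) {b : ι → R}
    (hb : A *ᵥ b = 0) : b = 0 := by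
  have hB : ∀ x, B *ᵥ x = 0 → x = 0 := fun x hx =>
    hD x (by rw [← hAB, ← mulVec_mulVec, hx, mulVec_zero])
  obtain ⟨x, s, hs, hx⟩ := exists_mulVec_eq_op_smul hR hB b
  have hx0 : x = 0 := hD x (by rw [← hAB, ← mulVec_mulVec, hx, mulVec_smul, hb, smul_zero])
  rw [hx0, mulVec_zero] at hx
  funext i
  exact (mul_eq_zero.mp (congrFun hx i).symm).resolve_right hs

theorem eq_zero_of_comp_map_mulVec_eq_zero (hR : RightOreCondition R) {κ : Type*} [Fintype κ]
    [DecidableEq κ] (σ : R →+* Matrix κ κ R) (hσ : ∀ a, a ≠ 0 → ∀ x, σ a *ᵥ x = 0 → x = 0)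
    {ι : Type*} [Fintype ι] [DecidableEq ι] {M : Matrix ι ι R} (hM : ∀ x, M *ᵥ x = 0 → x = 0)
    {x : ι × κ → R} (hx : comp ι ι κ κ R (M.map σ) *ᵥ x = 0) : x = 0 := by
  obtain ⟨N, d, hd, hMN⟩ := exists_mul_eq_diagonal hR hM
  have hcomp : comp ι ι κ κ R (M.map σ) * comp ι ι κ κ R (N.map σ) =
      comp ι ι κ κ R (diagonal fun i => σ (d i)) := by
    rw [← compRingEquiv_apply, ← compRingEquiv_apply, ← map_mul, ← Matrix.map_mul, hMN,
      diagonal_map (map_zero σ)]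
    rfl
  exact eq_zero_of_mulVec_eq_zero_of_mul_eq hR hcomp
    (fun _ => eq_zero_of_comp_diagonal_mulVec_eq_zero fun i => hσ (d i) (hd i)) hx

end OreDomain

/-- If `R` is a right Ore domain and the columns of `σ(a)` are right `R`-linearly
independent for every nonzero `a ∈ R`, then `σ` is megainjective: for every
`r ≥ 1` and nonzero `a`, the columns of `σ^{(r)}(a)` are right `R`-linearly
independent. -/
theorem megainjective_of_rightOre {R : Type} [Ring R] [IsDomain R] {n : ℕ}
    (hOre : ∀ a b : R, a ≠ 0 → b ≠ 0 → ∃ u v : R, a * u = b * v ∧ a * u ≠ 0)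
    (σ : R →+* Matrix (Fin n) (Fin n) R)
    (hcols : ∀ a : R, a ≠ 0 → ∀ b : Fin n → R, (σ a).mulVec b = 0 → b = 0) :
    Megainjective σ := by
  rintro a ha r -
  induction r with
  | zero =>
    have : Unique (iterIndex n 0) := inferInstanceAs (Unique Unit)
    intro x hx
    funext u
    simpa [mulVec, dotProduct, sigmaIter, Subsingleton.elim u default, ha] using congrFun hx u
  | succ r ih => exact fun _ => eq_zero_of_comp_map_mulVec_eq_zero hOre σ hcols ih
end

section
/- Let S = R⟨x₁,…,xₙ; σ, δ⟩ be a free skew extension with σ arbitrary, w a monomial of length r in x₁,…,xₙ (ordered lexicographically among words of the same length), and a ∈ R. Then a·w ≡ Σ_{i=1}^{n^r} wᵢ σ^{(r)}_{ij}(a) modulo S_{r−1}, where w = w_j is the j-th monomial of length r in the lexicographic listing and S_{r−1} is the right R-submodule spanned by monomials of length ≤ r−1. -/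
/-- The monomial of length `r` in the generators indexed by `p : iterIndex n r`;
this realizes the correspondence between the `n^r` lexicographically ordered words
of length `r` and the rows/columns of `σ^{(r)}`. -/
def wordOfIndex (n : ℕ) : ∀ r : ℕ, iterIndex n r → FreeMonoid (Fin n)
  | 0, _ => 1
  | r + 1, p => wordOfIndex n r p.1 * FreeMonoid.of p.2

/-- `S_m`: the right `R`-submodule of `S` spanned by the monomials of length at
most `m` in the generators `x`. -/
def spanLen {R : Type} [Ring R] {n : ℕ} {S : Type} [Ring S]
    (lam : R →+* S) (x : Fin n → S) (m : ℕ) : Set S :=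
  {g | ∃ c : FreeMonoid (Fin n) →₀ R,
    (∀ w ∈ c.support, (FreeMonoid.toList w).length ≤ m) ∧
    g = c.sum fun w a => FreeMonoid.lift x w * lam a}


section helpers
variable {R : Type} [Ring R] {n : ℕ} {S : Type} [Ring S]
    (lam : R →+* S) (x : Fin n → S) {m : ℕ}

variable {R : Type} [Ring R] {n : ℕ} {S : Type} [Ring S]
    (lam : R →+* S) (x : Fin n → S) {m : ℕ}

lemma spanLen_zero_mem : (0 : S) ∈ spanLen lam x m :=
  ⟨0, by simp, by simp⟩

lemma spanLen_add_mem {g h : S} (hg : g ∈ spanLen lam x m) (hh : h ∈ spanLen lam x m) :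
    g + h ∈ spanLen lam x m := by
  classical
  obtain ⟨c, hc, rfl⟩ := hg
  obtain ⟨d, hd, rfl⟩ := hh
  refine ⟨c + d, ?_, ?_⟩
  · intro w hw
    rcases Finset.mem_union.1 (Finsupp.support_add hw) with h | h
    exacts [hc w h, hd w h]
  · rw [Finsupp.sum_add_index' (by simp) (by intro w a b; simp [mul_add])]

lemma spanLen_sum_mem {ι : Type*} (s : Finset ι) (f : ι → S)
    (h : ∀ i ∈ s, f i ∈ spanLen lam x m) : ∑ i ∈ s, f i ∈ spanLen lam x m :=
  Finset.sum_induction f (· ∈ spanLen lam x m)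
    (fun _ _ => spanLen_add_mem lam x) (spanLen_zero_mem lam x) h

lemma spanLen_single_mem (w : FreeMonoid (Fin n)) (hw : (FreeMonoid.toList w).length ≤ m)
    (a : R) : FreeMonoid.lift x w * lam a ∈ spanLen lam x m := by
  refine ⟨Finsupp.single w a, ?_, ?_⟩
  · intro v hv
    rw [Finset.mem_singleton.1 (Finsupp.support_single_subset hv)]
    exact hw
  · rw [Finsupp.sum_single_index (by simp)]

lemma wordOfIndex_length (n : ℕ) : ∀ (r : ℕ) (p : iterIndex n r),
    (FreeMonoid.toList (wordOfIndex n r p)).length = r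
  | 0, _ => rfl
  | r + 1, p => by
    simp [wordOfIndex, wordOfIndex_length n r p.1]

lemma spanLen_mul_x_mem {R : Type} [Ring R] {n : ℕ}
    (σ : R →+* Matrix (Fin n) (Fin n) R) (δ : R → Fin n → R)
    {S : Type} [Ring S] (lam : R →+* S) (x : Fin n → S)
    (hcomm : ∀ (r : R) (j : Fin n),
      lam r * x j = (∑ i, x i * lam (σ r i j)) + lam (δ r j))
    {m : ℕ} {g : S} (hg : g ∈ spanLen lam x m) (j : Fin n) :
    g * x j ∈ spanLen lam x (m + 1) := by
  obtain ⟨c, hc, rfl⟩ := hg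
  rw [Finsupp.sum, Finset.sum_mul]
  refine spanLen_sum_mem lam x _ _ (fun w hw => ?_)
  rw [mul_assoc, hcomm (c w) j, mul_add, Finset.mul_sum]
  refine spanLen_add_mem lam x (spanLen_sum_mem lam x _ _ (fun i _ => ?_)) ?_
  · rw [← mul_assoc]
    have : FreeMonoid.lift x w * x i = FreeMonoid.lift x (w * FreeMonoid.of i) := by
      rw [map_mul, FreeMonoid.lift_eval_of]
    rw [this]
    exact spanLen_single_mem lam x _ (by
      simpa using Nat.add_le_add_right (hc w hw) 1) _
  · exact spanLen_single_mem lam x _ ((hc w hw).trans (Nat.le_succ m)) _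
end helpers

/-- For any `a ∈ R` and any monomial `w_q` of length `r ≥ 1` (indexed by
`q : iterIndex n r`), one has `a·w_q ≡ Σ_p w_p σ^{(r)}_{pq}(a)` modulo the right
`R`-submodule `S_{r−1}` spanned by monomials of length `≤ r − 1`. -/


theorem scalar_times_word {R : Type} [Ring R] {n : ℕ}
    (σ : R →+* Matrix (Fin n) (Fin n) R) (δ : R → Fin n → R)
    (hδ : IsRightSigmaDeriv σ δ)
    (S : Type) [Ring S] (lam : R →+* S) (x : Fin n → S)
    (hS : IsSkewFreeExt σ δ S lam x)
    (a : R) (r : ℕ) (hr : 1 ≤ r) (q : iterIndex n r) :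
    lam a * FreeMonoid.lift x (wordOfIndex n r q)
      - (∑ p : iterIndex n r,
          FreeMonoid.lift x (wordOfIndex n r p) * lam (sigmaIter σ r a p q))
      ∈ spanLen lam x (r - 1) := by
  have hcomm := hS.2.2
  -- main claim, for all r (with truncated subtraction in the bound)
  have main : ∀ (r : ℕ) (q : iterIndex n r),
      lam a * FreeMonoid.lift x (wordOfIndex n r q)
        - (∑ p : iterIndex n r,
            FreeMonoid.lift x (wordOfIndex n r p) * lam (sigmaIter σ r a p q))
        ∈ spanLen lam x (r - 1) ∧
      (r = 0 → lam a * FreeMonoid.lift x (wordOfIndex n r q)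
        - (∑ p : iterIndex n r,
            FreeMonoid.lift x (wordOfIndex n r p) * lam (sigmaIter σ r a p q)) = 0) := by
    intro r
    induction r with
    | zero =>
      intro q
      have h0 : lam a * FreeMonoid.lift x (wordOfIndex n 0 q)
          - (∑ p : iterIndex n 0,
              FreeMonoid.lift x (wordOfIndex n 0 p) * lam (sigmaIter σ 0 a p q)) = 0 := by
        show lam a * FreeMonoid.lift x (1 : FreeMonoid (Fin n))
          - (∑ _p : Unit, FreeMonoid.lift x (1 : FreeMonoid (Fin n)) * lam a) = 0
        simp
      exact ⟨h0 ▸ spanLen_zero_mem lam x, fun _ => h0⟩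
    | succ r ih =>
      rintro ⟨q', j⟩
      set W : ∀ s, iterIndex n s → S := fun s p => FreeMonoid.lift x (wordOfIndex n s p)
        with hW
      set b : iterIndex n r → R := fun p => sigmaIter σ r a p q' with hb
      have hWsucc : ∀ (p : iterIndex n r) (i : Fin n),
          W (r+1) (p, i) = W r p * x i := by
        intro p i
        show FreeMonoid.lift x (wordOfIndex n r p * FreeMonoid.of i) = _
        rw [map_mul, FreeMonoid.lift_eval_of]
      set D : S := lam a * W r q' - ∑ p : iterIndex n r, W r p * lam (b p) with hD
      have key : lam a * W (r+1) (q', j)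
          - (∑ pp : iterIndex n (r+1), W (r+1) pp * lam (sigmaIter σ (r+1) a pp (q', j)))
          = D * x j + ∑ p : iterIndex n r, W r p * lam (δ (b p) j) := by
        have h1 : W (r+1) (q', j) = W r q' * x j := hWsucc q' j
        have h2 : ∀ p : iterIndex n r, (W r p * lam (b p)) * x j
            = (∑ i, W (r+1) (p, i) * lam (sigmaIter σ (r+1) a (p, i) (q', j)))
              + W r p * lam (δ (b p) j) := by
          intro p
          rw [mul_assoc, hcomm (b p) j, mul_add, Finset.mul_sum]
          congr 1
          refine Finset.sum_congr rfl (fun i _ => ?_)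
          rw [hWsucc, mul_assoc]
          rfl
        have hsum : (∑ pp : iterIndex n (r+1), W (r+1) pp * lam (sigmaIter σ (r+1) a pp (q', j)))
            = ∑ p : iterIndex n r, ∑ i : Fin n,
                W (r+1) (p, i) * lam (sigmaIter σ (r+1) a (p, i) (q', j)) := by
          show (∑ pp : iterIndex n r × Fin n,
              W (r+1) pp * lam (sigmaIter σ (r+1) a pp (q', j))) = _
          exact Fintype.sum_prod_type _
        rw [h1, hD, sub_mul, Finset.sum_mul, hsum,
          Finset.sum_congr rfl (fun p (_ : p ∈ Finset.univ) => h2 p), Finset.sum_add_distrib]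
        rw [← mul_assoc]
        abel
      rw [key]
      constructor
      · have hD1 : D * x j ∈ spanLen lam x r := by
          rcases Nat.eq_zero_or_pos r with hr0 | hrpos
          · subst hr0
            have hD0 : D = 0 := (ih q').2 rfl
            rw [hD0, zero_mul]
            exact spanLen_zero_mem lam x
          · have hg : D ∈ spanLen lam x (r - 1) := (ih q').1
            have := spanLen_mul_x_mem σ δ lam x hcomm hg j
            rwa [Nat.sub_add_cancel hrpos] at this
        refine spanLen_add_mem lam x hD1 (spanLen_sum_mem lam x _ _ (fun p _ => ?_))
        exact spanLen_single_mem lam x _ (le_of_eq (wordOfIndex_length n r p)) _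
      · intro h; exact absurd h (Nat.succ_ne_zero r)
  exact (main r q).1
end

section
/- Let S = R⟨x₁,…,xₙ; σ, δ⟩ with σ upper triangular (σ_{ij} = 0 for i > j) and each diagonal map σ_{ii} an automorphism of R. Then S is a prime ring if, and only if, a·S·b ≠ 0 for all nonzero a, b ∈ R. -/
namespace SkewAux


variable {n : ℕ}

/-- Base-(n+1) encoding of words over `Fin n` with digits `1..n`;
this realises the length-then-lex linear order on words inside `ℕ`. -/
def encL : List (Fin n) → ℕ
  | [] => 0
  | a :: l => (a.val + 1) * (n + 1) ^ l.length + encL l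

lemma encL_lt_pow (l : List (Fin n)) : encL l < (n + 1) ^ l.length := by
  induction l with
  | nil => simp [encL]
  | cons a l ih =>
      have ha : a.val + 1 ≤ n := a.isLt
      have : encL (a :: l) = (a.val+1) * (n+1)^l.length + encL l := rfl
      rw [this, List.length_cons, pow_succ]
      nlinarith [pow_pos (Nat.succ_pos n) l.length]

lemma pow_le_encL (l : List (Fin n)) (h : l ≠ []) : (n + 1) ^ (l.length - 1) ≤ encL l := by
  cases l with
  | nil => simp at h
  | cons a l =>
      have : (n+1)^l.length ≤ (a.val + 1) * (n + 1) ^ l.length := by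
        nlinarith [pow_pos (Nat.succ_pos n) l.length]
      simp only [encL, List.length_cons, Nat.add_sub_cancel]
      omega

lemma encL_lt_of_length_lt {l₁ l₂ : List (Fin n)} (h : l₁.length < l₂.length) :
    encL l₁ < encL l₂ := by
  have h1 := encL_lt_pow l₁
  have h2 := pow_le_encL l₂ (by intro e; simp [e] at h)
  have : (n+1) ^ l₁.length ≤ (n+1) ^ (l₂.length - 1) :=
    Nat.pow_le_pow_right (Nat.succ_pos n) (by omega)
  omega

lemma length_le_of_encL_le {l₁ l₂ : List (Fin n)} (h : encL l₁ ≤ encL l₂) :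
    l₁.length ≤ l₂.length := by
  by_contra hc
  exact absurd h (not_le.mpr (encL_lt_of_length_lt (by omega)))

lemma encL_append (l₁ l₂ : List (Fin n)) :
    encL (l₁ ++ l₂) = encL l₁ * (n + 1) ^ l₂.length + encL l₂ := by
  induction l₁ with
  | nil => simp [encL]
  | cons a l ih =>
      show encL (a :: (l ++ l₂)) = _
      simp only [encL, ih, List.length_append, pow_add, List.length_cons]
      ring

lemma encL_inj : ∀ {l₁ l₂ : List (Fin n)}, encL l₁ = encL l₂ → l₁ = l₂ := by
  intro l₁
  induction l₁ with
  | nil =>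
      intro l₂ h
      cases l₂ with
      | nil => rfl
      | cons b l =>
          exfalso
          have := encL_lt_of_length_lt (l₁ := ([] : List (Fin n))) (l₂ := b :: l) (by simp)
          omega
  | cons a l ih =>
      intro l₂ h
      cases l₂ with
      | nil =>
          exfalso
          have := encL_lt_of_length_lt (l₁ := ([] : List (Fin n))) (l₂ := a :: l) (by simp)
          omega
      | cons b l₂ =>
          have h1 := length_le_of_encL_le (le_of_eq h)
          have h2 := length_le_of_encL_le (le_of_eq h.symm)
          simp only [List.length_cons] at h1 h2
          have hlen : l.length = l₂.length := by omega
          have e1 := encL_lt_pow l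
          have e2 := encL_lt_pow l₂
          simp only [encL, hlen] at h e1 ⊢
          have hab : a.val = b.val := by nlinarith
          have : encL l = encL l₂ := by nlinarith
          rw [ih this, Fin.ext hab]

section Core

variable {R : Type} [Ring R] {S : Type} [Ring S]
variable (σ : R →+* Matrix (Fin n) (Fin n) R) (δ : R → Fin n → R)
variable (lam : R →+* S) (x : Fin n → S)

abbrev Wrd (n : ℕ) := FreeMonoid (Fin n)

/-- numeric encoding of a word -/
def enc (w : Wrd n) : ℕ := encL (FreeMonoid.toList w)

/-- iterated diagonal twist -/
def tauL : List (Fin n) → R → R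
  | [], r => r
  | j :: l, r => tauL l (σ r j j)

def tau (w : Wrd n) (r : R) : R := tauL σ (FreeMonoid.toList w) r

/-- the right-coefficient realization map -/
noncomputable def Phi : (Wrd n →₀ R) →+ S where
  toFun c := c.sum fun w a => FreeMonoid.lift x w * lam a
  map_zero' := Finsupp.sum_zero_index
  map_add' c d := by
    show (c + d).sum (fun w a => FreeMonoid.lift x w * lam a)
      = c.sum (fun w a => FreeMonoid.lift x w * lam a)
        + d.sum (fun w a => FreeMonoid.lift x w * lam a)
    exact Finsupp.sum_add_index' (fun w => by simp)
      (fun w a b => by rw [map_add, mul_add])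

lemma Phi_apply (c : Wrd n →₀ R) :
    Phi lam x c = c.sum fun w a => FreeMonoid.lift x w * lam a := rfl

lemma Phi_single (w : Wrd n) (a : R) :
    Phi lam x (Finsupp.single w a) = FreeMonoid.lift x w * lam a := by
  rw [Phi_apply]
  exact Finsupp.sum_single_index (by simp)

lemma Phi_mapDomain (w : Wrd n) (e : Wrd n →₀ R) :
    Phi lam x (Finsupp.mapDomain (fun u => w * u) e)
      = FreeMonoid.lift x w * Phi lam x e := by
  rw [Phi_apply, Phi_apply,
    Finsupp.sum_mapDomain_index (fun b => by simp) (fun b m₁ m₂ => by rw [map_add, mul_add]),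
    Finsupp.mul_sum]
  exact Finsupp.sum_congr fun u _ => by rw [map_mul, mul_assoc]

lemma Phi_mapRange (e : Wrd n →₀ R) (r : R) :
    Phi lam x (Finsupp.mapRange (· * r) (zero_mul r) e)
      = Phi lam x e * lam r := by
  rw [Phi_apply, Phi_apply,
    Finsupp.sum_mapRange_index (fun w => by simp), Finsupp.sum_mul]
  exact Finsupp.sum_congr fun u _ => by rw [map_mul, mul_assoc]

instance : DecidableEq (Wrd n) :=
  fun a b => decidable_of_iff (FreeMonoid.toList a = FreeMonoid.toList b)
    FreeMonoid.toList.injective.eq_iff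

lemma enc_inj : Function.Injective (enc (n := n)) :=
  fun _ _ h => FreeMonoid.toList.injective (encL_inj h)

lemma enc_mul (u v : Wrd n) :
    enc (u * v) = enc u * (n + 1) ^ (FreeMonoid.toList v).length + enc v := by
  show encL _ = _
  rw [FreeMonoid.toList_mul, encL_append]; rfl

lemma wlen_le_of_enc_le {u v : Wrd n} (h : enc u ≤ enc v) :
    (FreeMonoid.toList u).length ≤ (FreeMonoid.toList v).length :=
  length_le_of_encL_le h

lemma mul_eq_mul_of_enc {u v u' v' : Wrd n} (h : u * v = u' * v')
    (h1 : enc u ≤ enc u') (h2 : enc v ≤ enc v') : u = u' ∧ v = v' := by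
  have hl := congrArg FreeMonoid.toList h
  simp only [FreeMonoid.toList_mul] at hl
  have l1 := wlen_le_of_enc_le h1
  have l2 := wlen_le_of_enc_le h2
  have hlen : (FreeMonoid.toList u).length = (FreeMonoid.toList u').length := by
    have := congrArg List.length hl
    simp only [List.length_append] at this
    omega
  obtain ⟨e1, e2⟩ := List.append_inj hl hlen
  exact ⟨FreeMonoid.toList.injective e1, FreeMonoid.toList.injective e2⟩

lemma encL_cons_self (j : Fin n) (l : List (Fin n)) : encL l < encL (j :: l) :=
  encL_lt_of_length_lt (by simp)

lemma encL_cons_lt_cons {i j : Fin n} {u l : List (Fin n)} (hij : i ≤ j)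
    (h : encL u < encL l) : encL (i :: u) < encL (j :: l) := by
  have hu : u.length ≤ l.length := length_le_of_encL_le h.le
  rcases lt_or_eq_of_le hu with hu | hu
  · exact encL_lt_of_length_lt (by simp; omega)
  · show (i.val + 1) * (n+1) ^ u.length + encL u < (j.val + 1) * (n+1) ^ l.length + encL l
    rw [hu]
    have : i.val + 1 ≤ j.val + 1 := by exact_mod_cast Nat.succ_le_succ hij
    nlinarith [pow_pos (Nat.succ_pos n) l.length]

lemma encL_cons_lt_cons' {i j : Fin n} (l : List (Fin n)) (hij : i < j) :
    encL (i :: l) < encL (j :: l) := by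
  show (i.val + 1) * (n+1) ^ l.length + encL l < (j.val + 1) * (n+1) ^ l.length + encL l
  have : i.val + 1 < j.val + 1 := by exact_mod_cast Nat.succ_lt_succ hij
  nlinarith [pow_pos (Nat.succ_pos n) l.length]

variable {σ} in
lemma tauL_zero (l : List (Fin n)) : tauL σ l (0 : R) = 0 := by
  induction l with
  | nil => rfl
  | cons j l ih => show tauL σ l (σ 0 j j) = 0; rw [map_zero]; simpa using ih

variable {σ} in
lemma tauL_eq_zero (haut : ∀ i : Fin n, Function.Bijective (fun r : R => σ r i i))
    {l : List (Fin n)} {r : R} (h : tauL σ l r = 0) : r = 0 := by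
  induction l generalizing r with
  | nil => exact h
  | cons j l ih =>
      have : σ r j j = 0 := ih h
      have h0 : σ (0 : R) j j = 0 := by rw [map_zero]; rfl
      exact (haut j).injective (by simpa [h0] using this)

variable {σ δ lam x} in
/-- Commutation: moving a scalar from the left of a monomial to the right,
up to strictly `enc`-smaller correction terms. -/
lemma lam_mul_X
    (hrule : ∀ (r : R) (j : Fin n),
      lam r * x j = (∑ i, x i * lam (σ r i j)) + lam (δ r j))
    (hinj : Function.Injective (Phi lam x (n := n)))
    (htri : ∀ (r : R) (i j : Fin n), j < i → σ r i j = 0) :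
    ∀ (l : List (Fin n)) (r : R),
      ∃ e : Wrd n →₀ R, (∀ u ∈ e.support, encL (FreeMonoid.toList u) < encL l) ∧
        lam r * FreeMonoid.lift x (FreeMonoid.ofList l)
          = FreeMonoid.lift x (FreeMonoid.ofList l) * lam (tauL σ l r)
            + Phi lam x e := by
  intro l
  induction l with
  | nil =>
      intro r
      refine ⟨0, by simp, ?_⟩
      show lam r * FreeMonoid.lift x 1 = FreeMonoid.lift x 1 * lam r + Phi lam x 0
      simp
  | cons j l' ih =>
      intro r
      choose eF hsup heq using ih
      set Xl := FreeMonoid.lift x (FreeMonoid.ofList l') with hXl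
      have hXc : FreeMonoid.lift x (FreeMonoid.ofList (j :: l')) = x j * Xl := by
        show FreeMonoid.lift x (FreeMonoid.of j * FreeMonoid.ofList l') = _
        rw [map_mul, FreeMonoid.lift_eval_of]
      have hz : ∀ i : Fin n, j < i → eF (σ r i j) = 0 := by
        intro i hi
        have h0 : σ r i j = 0 := htri r i j hi
        have := heq (σ r i j)
        rw [h0, map_zero, zero_mul, tauL_zero, map_zero, mul_zero, zero_add] at this
        exact hinj (by rw [h0, map_zero]; exact this.symm)
      refine ⟨(∑ i ∈ Finset.univ.erase j,
          Finsupp.single (FreeMonoid.ofList (i :: l')) (tauL σ l' (σ r i j)))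
        + (∑ i : Fin n,
          Finsupp.mapDomain (fun u => FreeMonoid.of i * u) (eF (σ r i j)))
        + Finsupp.single (FreeMonoid.ofList l') (tauL σ l' (δ r j))
        + eF (δ r j), ?_, ?_⟩
      · intro u hu
        rcases Finset.mem_union.1 (Finsupp.support_add hu) with hu | hu
        · rcases Finset.mem_union.1 (Finsupp.support_add hu) with hu | hu
          · rcases Finset.mem_union.1 (Finsupp.support_add hu) with hu | hu
            · -- single (i :: l') terms, i ≠ j
              obtain ⟨i, hi, hui⟩ := Finset.mem_biUnion.1 (Finsupp.support_finset_sum hu)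
              have hne : tauL σ l' (σ r i j) ≠ 0 := by
                intro h0
                rw [h0] at hui
                simp at hui
              have hu' : u = FreeMonoid.ofList (i :: l') := by
                have := Finsupp.support_single_subset hui
                simpa using this
              have hij : i < j := by
                rcases lt_or_gt_of_ne (Finset.ne_of_mem_erase hi) with h | h
                · exact h
                · exact absurd (by rw [htri r i j h, tauL_zero]) hne
              rw [hu', FreeMonoid.toList_ofList]
              exact encL_cons_lt_cons' l' hij
            · -- mapDomain terms
              obtain ⟨i, -, hui⟩ := Finset.mem_biUnion.1 (Finsupp.support_finset_sum hu)
              have hij : i ≤ j := by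
                by_contra hc
                rw [hz i (by omega), Finsupp.mapDomain_zero] at hui
                simp at hui
              obtain ⟨u', hu', huu⟩ := Finset.mem_image.1 (Finsupp.mapDomain_support hui)
              have : FreeMonoid.toList u = i :: FreeMonoid.toList u' := by
                rw [← huu, FreeMonoid.toList_mul, FreeMonoid.toList_of]; rfl
              rw [this]
              exact encL_cons_lt_cons hij (hsup _ _ hu')
          · -- single l' term
            have hu' : u = FreeMonoid.ofList l' := by
              have := Finsupp.support_single_subset hu
              simpa using this
            rw [hu', FreeMonoid.toList_ofList]
            exact encL_cons_self j l'
        · -- eF (δ r j)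
          exact lt_trans (hsup _ _ hu) (encL_cons_self j l')
      · -- the equation
        rw [hXc]
        rw [← mul_assoc, hrule, add_mul, Finset.sum_mul]
        have hterm : ∀ i : Fin n, x i * lam (σ r i j) * Xl
            = x i * Xl * lam (tauL σ l' (σ r i j))
              + x i * Phi lam x (eF (σ r i j)) := by
          intro i
          rw [mul_assoc, heq (σ r i j), mul_add, ← mul_assoc]
        rw [Finset.sum_congr rfl (fun i _ => hterm i), Finset.sum_add_distrib]
        rw [heq (δ r j)]
        rw [← Finset.add_sum_erase _
          (fun i => x i * Xl * lam (tauL σ l' (σ r i j))) (Finset.mem_univ j)]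
        have hrhs : Phi lam x ((∑ i ∈ Finset.univ.erase j,
              Finsupp.single (FreeMonoid.ofList (i :: l')) (tauL σ l' (σ r i j)))
            + (∑ i : Fin n,
              Finsupp.mapDomain (fun u => FreeMonoid.of i * u) (eF (σ r i j)))
            + Finsupp.single (FreeMonoid.ofList l') (tauL σ l' (δ r j))
            + eF (δ r j))
            = (∑ i ∈ Finset.univ.erase j, x i * Xl * lam (tauL σ l' (σ r i j)))
              + (∑ i : Fin n, x i * Phi lam x (eF (σ r i j)))
              + Xl * lam (tauL σ l' (δ r j))
              + Phi lam x (eF (δ r j)) := by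
          rw [map_add, map_add, map_add, map_sum, map_sum, Phi_single]
          congr 2
          · congr 1
            · refine Finset.sum_congr rfl (fun i _ => ?_)
              rw [Phi_single]
              have : FreeMonoid.lift x (FreeMonoid.ofList (i :: l')) = x i * Xl := by
                show FreeMonoid.lift x (FreeMonoid.of i * FreeMonoid.ofList l') = _
                rw [map_mul, FreeMonoid.lift_eval_of]
              rw [this]
            · refine Finset.sum_congr rfl (fun i _ => ?_)
              rw [Phi_mapDomain, FreeMonoid.lift_eval_of]
        rw [hrhs]
        have htj : tauL σ (j :: l') r = tauL σ l' (σ r j j) := rfl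
        rw [htj]
        simp only [mul_assoc]
        abel



variable {σ} {δ} {lam} {x}
variable (hbij : Function.Bijective (Phi lam x (n := n)))

/-- right-coefficient additive equivalence -/
noncomputable def rcE : (Wrd n →₀ R) ≃+ S := AddEquiv.ofBijective (Phi lam x) hbij

lemma rcE_apply (c : Wrd n →₀ R) : rcE hbij c = Phi lam x c := rfl

lemma Phi_rc (s : S) : Phi lam x ((rcE hbij).symm s) = s :=
  (rcE hbij).apply_symm_apply s

lemma rc_Phi (c : Wrd n →₀ R) : (rcE hbij).symm (Phi lam x c) = c :=
  (rcE hbij).symm_apply_apply c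

lemma rc_single (w : Wrd n) (a : R) :
    (rcE hbij).symm (FreeMonoid.lift x w * lam a) = Finsupp.single w a := by
  rw [← Phi_single lam x, rc_Phi]

lemma rc_mul_lam (s : S) (r : R) :
    (rcE hbij).symm (s * lam r)
      = Finsupp.mapRange (· * r) (zero_mul r) ((rcE hbij).symm s) := by
  conv_lhs => rw [← Phi_rc hbij s]
  rw [← Phi_mapRange, rc_Phi]

lemma rc_X_mul (w : Wrd n) (s : S) :
    (rcE hbij).symm (FreeMonoid.lift x w * s)
      = Finsupp.mapDomain (fun u => w * u) ((rcE hbij).symm s) := by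
  conv_lhs => rw [← Phi_rc hbij s]
  rw [← Phi_mapDomain, rc_Phi]

lemma mul_left_inj_wrd (w : Wrd n) :
    Function.Injective (fun u : Wrd n => w * u) := by
  intro a b h
  apply FreeMonoid.toList.injective
  have := congrArg FreeMonoid.toList h
  simp only [FreeMonoid.toList_mul] at this
  exact List.append_cancel_left this

variable (hrule : ∀ (r : R) (j : Fin n),
      lam r * x j = (∑ i, x i * lam (σ r i j)) + lam (δ r j))
variable (htri : ∀ (r : R) (i j : Fin n), j < i → σ r i j = 0)

include hbij hrule htri in
/-- wrapper of the commutation lemma at the `Wrd` level -/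
lemma lam_mul_X' (w : Wrd n) (r : R) :
    ∃ e : Wrd n →₀ R, (∀ u ∈ e.support, enc u < enc w) ∧
      lam r * FreeMonoid.lift x w
        = FreeMonoid.lift x w * lam (tau σ w r) + Phi lam x e := by
  obtain ⟨e, h1, h2⟩ := lam_mul_X hrule hbij.1 htri (FreeMonoid.toList w) r
  rw [FreeMonoid.ofList_toList] at h2
  exact ⟨e, h1, h2⟩

include hrule htri in
lemma extraction1 (F : Finset (Wrd n)) (p : Wrd n → S) (Vb Yb : Wrd n)
    (h1 : ∀ v ∈ F, enc v ≤ enc Vb)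
    (h2 : ∀ v ∈ F, ∀ u ∈ ((rcE hbij).symm (p v)).support, enc u ≤ enc Yb) :
    (rcE hbij).symm (∑ v ∈ F, p v * FreeMonoid.lift x v) (Yb * Vb)
      = if Vb ∈ F then tau σ Vb ((rcE hbij).symm (p Vb) Yb) else 0 := by
  classical
  choose EE hE1 hE2 using lam_mul_X' hbij hrule htri
  have key : ∀ v ∈ F, (rcE hbij).symm (p v * FreeMonoid.lift x v) (Yb * Vb)
      = if v = Vb then tau σ Vb ((rcE hbij).symm (p v) Yb) else 0 := by
    intro v hv
    set c := (rcE hbij).symm (p v) with hc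
    have hpv : p v * FreeMonoid.lift x v
        = c.sum fun u a => Phi lam x
            (Finsupp.single (u * v) (tau σ v a)
              + Finsupp.mapDomain (fun z => u * z) (EE v a)) := by
      conv_lhs => rw [← Phi_rc hbij (p v), ← hc, Phi_apply, Finsupp.sum_mul]
      refine Finsupp.sum_congr fun u hu => ?_
      rw [mul_assoc, hE2 v (c u), map_add, Phi_single, Phi_mapDomain, mul_add,
        ← mul_assoc, ← map_mul]
    rw [hpv]
    have : (rcE hbij).symm (c.sum fun u a => Phi lam x
        (Finsupp.single (u * v) (tau σ v a)
          + Finsupp.mapDomain (fun z => u * z) (EE v a)))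
        = c.sum fun u a => (Finsupp.single (u * v) (tau σ v a)
          + Finsupp.mapDomain (fun z => u * z) (EE v a)) := by
      rw [Finsupp.sum, Finsupp.sum, map_sum]
      exact Finset.sum_congr rfl fun u _ => rc_Phi hbij _
    rw [this, Finsupp.sum_apply]
    have hmd : ∀ u ∈ c.support,
        (Finsupp.mapDomain (fun z => u * z) (EE v (c u))) (Yb * Vb) = 0 := by
      intro u hu
      by_contra hne
      have hmem : Yb * Vb ∈ (Finsupp.mapDomain (fun z => u * z) (EE v (c u))).support :=
        Finsupp.mem_support_iff.2 hne
      obtain ⟨u', hu', huu⟩ := Finset.mem_image.1 (Finsupp.mapDomain_support hmem)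
      have h3 := hE1 v (c u) u' hu'
      have h4 := h2 v hv u hu
      obtain ⟨-, rfl⟩ := mul_eq_mul_of_enc huu h4 (le_trans h3.le (h1 v hv))
      exact absurd h3 (not_lt.2 (h1 v hv))
    have hsum : (c.sum fun u a => (Finsupp.single (u * v) (tau σ v a)
          + Finsupp.mapDomain (fun z => u * z) (EE v a)) (Yb * Vb))
        = c.sum fun u a => (Finsupp.single (u * v) (tau σ v a)) (Yb * Vb) := by
      refine Finsupp.sum_congr fun u hu => ?_
      rw [Finsupp.add_apply, hmd u hu, add_zero]
    rw [hsum]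
    by_cases hvV : v = Vb
    · subst hvV
      rw [if_pos rfl]
      refine (Finset.sum_eq_single Yb (fun u hu hune => ?_) (fun hnm => ?_)).trans ?_
      · show (Finsupp.single (u * v) (tau σ v (c u))) (Yb * v) = 0
        rw [Finsupp.single_apply, if_neg]
        intro hEq
        exact hune (mul_eq_mul_of_enc hEq (h2 v hv u hu) le_rfl).1
      · show (Finsupp.single (Yb * v) (tau σ v (c Yb))) (Yb * v) = 0
        rw [Finsupp.notMem_support_iff.1 hnm]
        have : tau σ v (0 : R) = 0 := tauL_zero _
        rw [this]
        simp
      · show (Finsupp.single (Yb * v) (tau σ v (c Yb))) (Yb * v) = tau σ v (c Yb)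
        simp [Finsupp.single_apply]
    · rw [if_neg hvV]
      refine Finset.sum_eq_zero fun u hu => ?_
      show (Finsupp.single (u * v) (tau σ v (c u))) (Yb * Vb) = 0
      rw [Finsupp.single_apply, if_neg]
      intro hEq
      exact hvV (mul_eq_mul_of_enc hEq (h2 v hv u hu) (h1 v hv)).2
  rw [map_sum, Finset.sum_apply']
  by_cases hV : Vb ∈ F
  · rw [if_pos hV]
    rw [Finset.sum_congr rfl key]
    rw [Finset.sum_ite_eq' F Vb (fun v => tau σ Vb ((rcE hbij).symm (p v) Yb))]
    rw [if_pos hV]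
  · rw [if_neg hV]
    refine Finset.sum_eq_zero fun v hv => ?_
    rw [key v hv, if_neg]
    intro h; exact hV (h ▸ hv)

lemma extraction2 (F : Finset (Wrd n)) (P : Wrd n → S) (wb Zb : Wrd n)
    (h1 : ∀ w ∈ F, enc w ≤ enc wb)
    (h2 : ∀ w ∈ F, ∀ u ∈ ((rcE hbij).symm (P w)).support, enc u ≤ enc Zb) :
    (rcE hbij).symm (∑ w ∈ F, FreeMonoid.lift x w * P w) (wb * Zb)
      = if wb ∈ F then (rcE hbij).symm (P wb) Zb else 0 := by
  classical
  rw [map_sum, Finset.sum_apply']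
  have key : ∀ w ∈ F, ((rcE hbij).symm (FreeMonoid.lift x w * P w)) (wb * Zb)
      = if w = wb then (rcE hbij).symm (P w) Zb else 0 := by
    intro w hw
    rw [rc_X_mul]
    by_cases hwb : w = wb
    · subst hwb
      rw [if_pos rfl, Finsupp.mapDomain_apply (mul_left_inj_wrd w)]
    · rw [if_neg hwb]
      by_contra hne
      have hmem : wb * Zb ∈ (Finsupp.mapDomain (fun u => w * u)
          ((rcE hbij).symm (P w))).support := Finsupp.mem_support_iff.2 hne
      obtain ⟨u, hu, huu⟩ := Finset.mem_image.1 (Finsupp.mapDomain_support hmem)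
      exact hwb (mul_eq_mul_of_enc huu (h1 w hw) (h2 w hw u hu)).1
  rw [Finset.sum_congr rfl key]
  rw [Finset.sum_ite_eq' F wb (fun w => (rcE hbij).symm (P w) Zb)]

variable (lam x) in
/-- the left-coefficient realization map -/
noncomputable def Psi : (Wrd n →₀ R) →+ S where
  toFun d := d.sum fun w r => lam r * FreeMonoid.lift x w
  map_zero' := Finsupp.sum_zero_index
  map_add' c d := by
    show (c + d).sum (fun w r => lam r * FreeMonoid.lift x w)
      = c.sum (fun w r => lam r * FreeMonoid.lift x w)
        + d.sum (fun w r => lam r * FreeMonoid.lift x w)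
    exact Finsupp.sum_add_index' (fun w => by simp)
      (fun w a b => by rw [map_add, add_mul])

variable (lam x) in
lemma Psi_apply (d : Wrd n →₀ R) :
    Psi lam x d = d.sum fun w r => lam r * FreeMonoid.lift x w := rfl

variable (lam x) in
lemma Psi_single (w : Wrd n) (r : R) :
    Psi lam x (Finsupp.single w r) = lam r * FreeMonoid.lift x w := by
  rw [Psi_apply]
  exact Finsupp.sum_single_index (by simp)

lemma rc_lam (a : R) :
    (rcE hbij).symm (lam a) = Finsupp.single (1 : Wrd n) a := by
  have := rc_single hbij (1 : Wrd n) a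
  rwa [map_one, one_mul] at this

variable (haut : ∀ i : Fin n, Function.Bijective (fun r : R => σ r i i))

include hbij hrule htri haut in
lemma exists_leftForm (s : S) : ∃ d : Wrd n →₀ R, s = Psi lam x d := by
  classical
  set P : S → Prop := fun s => ∃ d : Wrd n →₀ R, s = Psi lam x d with hP
  have P0 : P 0 := ⟨0, (map_zero _).symm⟩
  have Padd : ∀ a b, P a → P b → P (a + b) := by
    rintro a b ⟨da, rfl⟩ ⟨db, rfl⟩
    exact ⟨da + db, (map_add _ _ _).symm⟩
  have Psum : ∀ (ι : Type) (F : Finset ι) (f : ι → S),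
      (∀ i ∈ F, P (f i)) → P (∑ i ∈ F, f i) := by
    intro ι F f hf
    exact Finset.sum_induction f P Padd P0 hf
  have Pneg : ∀ a, P a → P (-a) := by
    rintro a ⟨d, rfl⟩
    exact ⟨-d, (map_neg _ _).symm⟩
  have Psub : ∀ a b, P a → P b → P (a - b) := by
    intro a b ha hb
    rw [sub_eq_add_neg]
    exact Padd _ _ ha (Pneg _ hb)
  have Psingle : ∀ (w : Wrd n) (r : R), P (lam r * FreeMonoid.lift x w) :=
    fun w r => ⟨Finsupp.single w r, (Psi_single lam x w r).symm⟩
  -- move one generator past a scalar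
  have main : ∀ (m : ℕ) (j : Fin n), j.val = m → ∀ (c : R) (l : List (Fin n)),
      P (x j * (lam c * FreeMonoid.lift x (FreeMonoid.ofList l))) := by
    intro m
    induction m using Nat.strong_induction_on with
    | _ m ih =>
      intro j hj c l
      obtain ⟨r, hr⟩ := (haut j).2 c
      have hr' : σ r j j = c := hr
      have hre := hrule r j
      have hpeel : ∑ i : Fin n, x i * lam (σ r i j)
          = x j * lam (σ r j j) + ∑ i ∈ Finset.univ.erase j, x i * lam (σ r i j) :=
        (Finset.add_sum_erase _ _ (Finset.mem_univ j)).symm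
      have hxj : x j * lam c = lam r * x j
          - ∑ i ∈ Finset.univ.erase j, x i * lam (σ r i j) - lam (δ r j) := by
        rw [← hr']
        rw [hpeel] at hre
        rw [eq_sub_iff_add_eq, eq_sub_iff_add_eq, hre]
        abel
      have hgoal : x j * (lam c * FreeMonoid.lift x (FreeMonoid.ofList l))
          = lam r * FreeMonoid.lift x (FreeMonoid.ofList (j :: l))
            - ∑ i ∈ Finset.univ.erase j,
                x i * (lam (σ r i j) * FreeMonoid.lift x (FreeMonoid.ofList l))
            - lam (δ r j) * FreeMonoid.lift x (FreeMonoid.ofList l) := by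
        have h1 : FreeMonoid.lift x (FreeMonoid.ofList (j :: l))
            = x j * FreeMonoid.lift x (FreeMonoid.ofList l) := by
          show FreeMonoid.lift x (FreeMonoid.of j * FreeMonoid.ofList l) = _
          rw [map_mul, FreeMonoid.lift_eval_of]
        rw [h1, ← mul_assoc, hxj, sub_mul, sub_mul, Finset.sum_mul, mul_assoc]
        congr 2
        exact Finset.sum_congr rfl fun i _ => by rw [mul_assoc]
      rw [hgoal]
      refine Psub _ _ (Psub _ _ (Psingle _ _) ?_) (Psingle _ _)
      refine Psum _ _ _ fun i hi => ?_
      rcases lt_trichotomy i j with hij | hij | hij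
      · exact ih i.val (by omega) i rfl _ _
      · exact absurd hij (Finset.ne_of_mem_erase hi)
      · rw [htri r i j hij, map_zero, zero_mul, mul_zero]
        exact P0
  have main2 : ∀ (l : List (Fin n)) (a : R),
      P (FreeMonoid.lift x (FreeMonoid.ofList l) * lam a) := by
    intro l
    induction l with
    | nil =>
        intro a
        refine ⟨Finsupp.single 1 a, ?_⟩
        rw [Psi_single]
        show FreeMonoid.lift x 1 * lam a = lam a * FreeMonoid.lift x 1
        rw [map_one, one_mul, mul_one]
    | cons j l ihl =>
        intro a
        have h1 : FreeMonoid.lift x (FreeMonoid.ofList (j :: l)) * lam a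
            = x j * (FreeMonoid.lift x (FreeMonoid.ofList l) * lam a) := by
          show FreeMonoid.lift x (FreeMonoid.of j * FreeMonoid.ofList l) * lam a = _
          rw [map_mul, FreeMonoid.lift_eval_of, mul_assoc]
        obtain ⟨d, hd⟩ := ihl a
        rw [h1, hd, Psi_apply, Finsupp.mul_sum]
        refine Psum _ _ _ fun w _ => ?_
        show P (x j * (lam (d w) * FreeMonoid.lift x w))
        have := main j.val j rfl (d w) (FreeMonoid.toList w)
        rwa [FreeMonoid.ofList_toList] at this
  -- general element
  have : s = Phi lam x ((rcE hbij).symm s) := (Phi_rc hbij s).symm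
  rw [this, Phi_apply]
  refine Psum _ _ _ fun w _ => ?_
  have := main2 (FreeMonoid.toList w) (((rcE hbij).symm s) w)
  rwa [FreeMonoid.ofList_toList] at this

include hbij hrule htri haut in
lemma leftForm_unique {d : Wrd n →₀ R} (h : Psi lam x d = 0) : d = 0 := by
  classical
  by_contra hd
  obtain ⟨V, hVmem, hVmax⟩ := Finset.exists_max_image d.support enc
    (Finsupp.support_nonempty_iff.2 hd)
  have hsum : Psi lam x d = ∑ v ∈ d.support, lam (d v) * FreeMonoid.lift x v := rfl
  have hext := extraction1 hbij hrule htri d.support (fun v => lam (d v)) V 1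
    (fun v hv => hVmax v hv)
    (fun v _ u hu => by
      rw [rc_lam] at hu
      have := Finsupp.support_single_subset hu
      simp only [Finset.mem_singleton] at this
      rw [this])
  rw [← hsum, h, map_zero, Finsupp.zero_apply, if_pos hVmem] at hext
  have : d V = 0 := by
    have hext' : (0 : R) = tau σ V (((rcE hbij).symm (lam (d V))) 1) := hext
    have h3 : ((rcE hbij).symm (lam (d V))) (1 : Wrd n) = d V := by
      rw [rc_lam]; simp
    rw [h3] at hext'
    exact tauL_eq_zero haut hext'.symm
  exact Finsupp.mem_support_iff.1 hVmem this

variable (lam x) in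
/-- left coefficient function, given existence of left forms -/
noncomputable def lcF (H : ∀ s : S, ∃ d : Wrd n →₀ R, s = Psi lam x d)
    (s : S) : Wrd n →₀ R := Classical.choose (H s)

variable (lam x) in
lemma lcF_spec (H : ∀ s : S, ∃ d : Wrd n →₀ R, s = Psi lam x d) (s : S) :
    s = Psi lam x (lcF lam x H s) := Classical.choose_spec (H s)

include hbij hrule htri haut in
lemma lcF_eq (H : ∀ s : S, ∃ d : Wrd n →₀ R, s = Psi lam x d)
    {s : S} {d : Wrd n →₀ R} (h : s = Psi lam x d) : lcF lam x H s = d := by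
  have h1 : Psi lam x (lcF lam x H s - d) = 0 := by
    rw [map_sub, ← lcF_spec lam x H s, ← h, sub_self]
  have := leftForm_unique hbij hrule htri haut h1
  rwa [sub_eq_zero] at this

include hbij hrule htri haut in
/-- Lemma A : if `f S g = 0` with `f ≠ 0`, then `a₀ S g = 0` for some nonzero scalar. -/
lemma lemmaA (f g : S) (hf : f ≠ 0) (hfg : ∀ t, f * t * g = 0) :
    ∃ a₀ : R, a₀ ≠ 0 ∧ ∀ t, lam a₀ * t * g = 0 := by
  classical
  have H := exists_leftForm hbij hrule htri haut (lam := lam) (x := x)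
  set I : Set S := {h | h ≠ 0 ∧ ∀ t, h * t * g = 0} with hI
  have hfI : f ∈ I := ⟨hf, hfg⟩
  set deg : S → ℕ := fun h => (((rcE hbij).symm h).support.sup enc) with hdegdef
  have hne : (deg '' I).Nonempty := ⟨deg f, f, hfI, rfl⟩
  obtain ⟨f₀, hf₀I, hdeg⟩ : ∃ f₀ ∈ I, deg f₀ = sInf (deg '' I) := by
    obtain ⟨h, hh, he⟩ := Nat.sInf_mem hne
    exact ⟨h, hh, he⟩
  set c₀ := (rcE hbij).symm f₀ with hc₀def
  have hc₀ : c₀ ≠ 0 := by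
    intro h0
    apply hf₀I.1
    have : f₀ = Phi lam x c₀ := (Phi_rc hbij f₀).symm
    rw [this, h0, map_zero]
  obtain ⟨W₀, hW₀mem, hW₀max⟩ := Finset.exists_max_image c₀.support enc
    (Finsupp.support_nonempty_iff.2 hc₀)
  have hdegf₀ : deg f₀ = enc W₀ :=
    le_antisymm (Finset.sup_le hW₀max) (Finset.le_sup hW₀mem)
  set a₀ := c₀ W₀ with ha₀def
  have ha₀ne : a₀ ≠ 0 := Finsupp.mem_support_iff.1 hW₀mem
  refine ⟨a₀, ha₀ne, ?_⟩
  intro t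
  set G := t * g with hGdef
  set d := lcF lam x H G with hddef
  have hGd : G = Psi lam x d := lcF_spec lam x H G
  -- rc of the products f₀ * lam r
  have hrc : ∀ r : R, (rcE hbij).symm (f₀ * lam r)
      = Finsupp.mapRange (· * r) (zero_mul r) c₀ := fun r => rc_mul_lam hbij f₀ r
  -- Step 1 : all layers vanish
  have hS1 : ∀ v : Wrd n, f₀ * lam (d v) = 0 := by
    by_contra hcon
    push_neg at hcon
    obtain ⟨v₁, hv₁⟩ := hcon
    set A := d.support.filter (fun v => f₀ * lam (d v) ≠ 0) with hAdef
    have hv₁A : v₁ ∈ A := by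
      refine Finset.mem_filter.2 ⟨Finsupp.mem_support_iff.2 ?_, hv₁⟩
      intro h0
      exact hv₁ (by rw [h0, map_zero, mul_zero])
    obtain ⟨vb, hvbA, hvbmax⟩ := Finset.exists_max_image A enc ⟨v₁, hv₁A⟩
    have hvbne : f₀ * lam (d vb) ≠ 0 := (Finset.mem_filter.1 hvbA).2
    -- the vanishing sum
    have hzero : (∑ v ∈ A, (f₀ * lam (d v)) * FreeMonoid.lift x v) = 0 := by
      have h1 : ∑ v ∈ d.support, (f₀ * lam (d v)) * FreeMonoid.lift x v = f₀ * G := by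
        rw [hGd, Psi_apply, Finsupp.mul_sum]
        exact Finset.sum_congr rfl fun v _ => by rw [mul_assoc]
      have h2 : f₀ * G = 0 := by
        rw [hGdef, ← mul_assoc]
        exact hf₀I.2 t
      rw [← h2, ← h1]
      refine Finset.sum_subset (Finset.filter_subset _ _) fun v hv hnv => ?_
      have : f₀ * lam (d v) = 0 := by
        by_contra hne2
        exact hnv (Finset.mem_filter.2 ⟨hv, hne2⟩)
      rw [this, zero_mul]
    have hext := extraction1 hbij hrule htri A (fun v => f₀ * lam (d v)) vb W₀
      (fun v hv => hvbmax v hv)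
      (fun v _ u hu => by
        have hu' : u ∈ (Finsupp.mapRange (· * d v) (zero_mul _) c₀).support := by
          rw [← hrc (d v)]; exact hu
        exact hW₀max u (Finsupp.support_mapRange hu'))
    rw [hzero, map_zero, Finsupp.zero_apply, if_pos hvbA] at hext
    have hval : a₀ * d vb = 0 := by
      have h4 : ((rcE hbij).symm (f₀ * lam (d vb))) W₀ = a₀ * d vb := by
        rw [hrc (d vb), Finsupp.mapRange_apply]
      have h5 : tau σ vb (((rcE hbij).symm (f₀ * lam (d vb))) W₀) = 0 := hext.symm
      rw [h4] at h5
      exact tauL_eq_zero haut h5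
    -- minimality contradiction
    have hpI : f₀ * lam (d vb) ∈ I := by
      refine ⟨hvbne, fun t' => ?_⟩
      show f₀ * lam (d vb) * t' * g = 0
      rw [mul_assoc f₀ (lam (d vb)) t']
      exact hf₀I.2 (lam (d vb) * t')
    have hsupp : ∀ u ∈ ((rcE hbij).symm (f₀ * lam (d vb))).support, enc u < enc W₀ := by
      intro u hu
      rw [hrc (d vb)] at hu
      have hmem := Finsupp.support_mapRange hu
      have hle := hW₀max u hmem
      rcases lt_or_eq_of_le hle with h | h
      · exact h
      · exfalso
        have : u = W₀ := enc_inj h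
        rw [this] at hu
        rw [Finsupp.mem_support_iff, Finsupp.mapRange_apply] at hu
        exact hu hval
    have hnonempty : ((rcE hbij).symm (f₀ * lam (d vb))).support.Nonempty := by
      rw [Finsupp.support_nonempty_iff]
      intro h0
      apply hvbne
      have : f₀ * lam (d vb) = Phi lam x ((rcE hbij).symm (f₀ * lam (d vb))) :=
        (Phi_rc hbij _).symm
      rw [this, h0, map_zero]
    obtain ⟨u₀, hu₀mem, hu₀max⟩ := Finset.exists_max_image _ enc hnonempty
    have hlt : deg (f₀ * lam (d vb)) < sInf (deg '' I) := by
      rw [← hdeg, hdegf₀]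
      calc deg (f₀ * lam (d vb)) = enc u₀ :=
            le_antisymm (Finset.sup_le hu₀max) (Finset.le_sup hu₀mem)
        _ < enc W₀ := hsupp u₀ hu₀mem
    exact absurd (Nat.sInf_le (Set.mem_image_of_mem deg hpI)) (not_le.2 hlt)
  -- Step 2 : conclude
  have hav : ∀ v : Wrd n, a₀ * d v = 0 := by
    intro v
    have h6 := congrArg (fun s => ((rcE hbij).symm s) W₀) (hS1 v)
    simpa [hrc (d v), Finsupp.mapRange_apply] using h6
  rw [mul_assoc, ← hGdef, hGd, Psi_apply, Finsupp.mul_sum]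
  refine Finset.sum_eq_zero fun v _ => ?_
  show lam a₀ * (lam (d v) * FreeMonoid.lift x v) = 0
  rw [← mul_assoc, ← map_mul, hav v, map_zero, zero_mul]

lemma lam_mul_Psi (r : R) (d : Wrd n →₀ R) :
    lam r * Psi lam x d
      = Psi lam x (Finsupp.mapRange (r * ·) (mul_zero r) d) := by
  rw [Psi_apply, Psi_apply, Finsupp.sum_mapRange_index (fun w => by simp),
    Finsupp.mul_sum]
  exact Finsupp.sum_congr fun v _ => by rw [← mul_assoc, ← map_mul]

include hrule htri in
lemma rc_Psi (d : Wrd n →₀ R) (Vb : Wrd n) (hVb : ∀ v ∈ d.support, enc v ≤ enc Vb) :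
    (∀ u ∈ ((rcE hbij).symm (Psi lam x d)).support, enc u ≤ enc Vb) ∧
    ((rcE hbij).symm (Psi lam x d)) Vb = tau σ Vb (d Vb) := by
  classical
  choose EE hE1 hE2 using lam_mul_X' hbij hrule htri
  have hdecomp : (rcE hbij).symm (Psi lam x d)
      = ∑ v ∈ d.support, (Finsupp.single v (tau σ v (d v)) + EE v (d v)) := by
    have h1 : Psi lam x d = ∑ v ∈ d.support, lam (d v) * FreeMonoid.lift x v := rfl
    rw [h1, map_sum]
    refine Finset.sum_congr rfl fun v _ => ?_
    rw [hE2 v (d v), map_add, rc_Phi]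
    congr 1
    rw [rc_single]
  constructor
  · intro u hu
    rw [hdecomp] at hu
    obtain ⟨v, hv, hu2⟩ := Finset.mem_biUnion.1 (Finsupp.support_finset_sum hu)
    rcases Finset.mem_union.1 (Finsupp.support_add hu2) with h | h
    · have := Finsupp.support_single_subset h
      simp only [Finset.mem_singleton] at this
      rw [this]
      exact hVb v hv
    · exact le_trans (hE1 v (d v) u h).le (hVb v hv)
  · rw [hdecomp, Finset.sum_apply']
    refine (Finset.sum_eq_single Vb (fun v hv hvne => ?_) (fun hnm => ?_)).trans ?_
    · rw [Finsupp.add_apply]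
      have hE0 : (EE v (d v)) Vb = 0 := by
        rw [← Finsupp.notMem_support_iff]
        intro hmem
        exact absurd (hE1 v (d v) Vb hmem) (not_lt.2 (hVb v hv))
      rw [hE0, add_zero, Finsupp.single_apply, if_neg hvne]
    · rw [Finsupp.add_apply, Finsupp.notMem_support_iff.1 hnm]
      have hE0 : (EE Vb (0 : R)) Vb = 0 := by
        rw [← Finsupp.notMem_support_iff]
        intro hmem
        exact absurd (hE1 Vb 0 Vb hmem) (lt_irrefl _)
      rw [hE0, add_zero, Finsupp.single_apply, if_pos rfl]
      have : tau σ Vb (0 : R) = 0 := tauL_zero _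
      rw [this]
    · rw [Finsupp.add_apply]
      have hE0 : (EE Vb (d Vb)) Vb = 0 := by
        rw [← Finsupp.notMem_support_iff]
        intro hmem
        exact absurd (hE1 Vb (d Vb) Vb hmem) (lt_irrefl _)
      rw [hE0, add_zero, Finsupp.single_apply, if_pos rfl]

include hbij hrule htri haut in
/-- Lemma B : if `a₀ S g = 0` with `g ≠ 0`, then `a₀ S b₀ = 0`
for some nonzero scalar `b₀`. -/
lemma lemmaB (a₀ : R) (g : S) (hg : g ≠ 0) (hag : ∀ t, lam a₀ * t * g = 0) :
    ∃ b₀ : R, b₀ ≠ 0 ∧ ∀ t, lam a₀ * t * lam b₀ = 0 := by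
  classical
  have H := exists_leftForm hbij hrule htri haut (lam := lam) (x := x)
  set J : Set S := {h | h ≠ 0 ∧ ∀ t, lam a₀ * t * h = 0} with hJ
  have hgJ : g ∈ J := ⟨hg, hag⟩
  set ldeg : S → ℕ := fun h => (lcF lam x H h).support.sup enc with hldegdef
  have hne : (ldeg '' J).Nonempty := ⟨ldeg g, g, hgJ, rfl⟩
  obtain ⟨g₀, hg₀J, hdeg⟩ : ∃ g₀ ∈ J, ldeg g₀ = sInf (ldeg '' J) := by
    obtain ⟨h, hh, he⟩ := Nat.sInf_mem hne
    exact ⟨h, hh, he⟩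
  set dg := lcF lam x H g₀ with hdgdef
  have hgd : g₀ = Psi lam x dg := lcF_spec lam x H g₀
  have hdgne : dg ≠ 0 := by
    intro h0
    apply hg₀J.1
    rw [hgd, h0, map_zero]
  obtain ⟨V₀, hV₀mem, hV₀max⟩ := Finset.exists_max_image dg.support enc
    (Finsupp.support_nonempty_iff.2 hdgne)
  have hdegg₀ : ldeg g₀ = enc V₀ :=
    le_antisymm (Finset.sup_le hV₀max) (Finset.le_sup hV₀mem)
  set b₀ := dg V₀ with hb₀def
  have hb₀ne : b₀ ≠ 0 := Finsupp.mem_support_iff.1 hV₀mem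
  refine ⟨b₀, hb₀ne, ?_⟩
  intro t
  set F' := lam a₀ * t with hF'def
  set cF := (rcE hbij).symm F' with hcFdef
  -- the layers, as left forms
  set D : Wrd n → (Wrd n →₀ R) :=
    fun w => Finsupp.mapRange (cF w * ·) (mul_zero _) dg with hDdef
  have hPw : ∀ w, lam (cF w) * g₀ = Psi lam x (D w) := by
    intro w
    rw [hgd, lam_mul_Psi]
  have hDsupp : ∀ w, ∀ v ∈ (D w).support, enc v ≤ enc V₀ :=
    fun w v hv => hV₀max v (Finsupp.support_mapRange hv)
  -- Step 1 : all layers vanish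
  have hS1 : ∀ w : Wrd n, lam (cF w) * g₀ = 0 := by
    by_contra hcon
    push_neg at hcon
    obtain ⟨w₁, hw₁⟩ := hcon
    set A := cF.support.filter (fun w => lam (cF w) * g₀ ≠ 0) with hAdef
    have hw₁A : w₁ ∈ A := by
      refine Finset.mem_filter.2 ⟨Finsupp.mem_support_iff.2 ?_, hw₁⟩
      intro h0
      exact hw₁ (by rw [h0, map_zero, zero_mul])
    obtain ⟨wb, hwbA, hwbmax⟩ := Finset.exists_max_image A enc ⟨w₁, hw₁A⟩
    have hwbne : lam (cF wb) * g₀ ≠ 0 := (Finset.mem_filter.1 hwbA).2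
    have hzero : (∑ w ∈ A, FreeMonoid.lift x w * (lam (cF w) * g₀)) = 0 := by
      have h1 : ∑ w ∈ cF.support, FreeMonoid.lift x w * (lam (cF w) * g₀)
          = F' * g₀ := by
        conv_rhs => rw [← Phi_rc hbij F', ← hcFdef, Phi_apply, Finsupp.sum_mul]
        exact Finset.sum_congr rfl fun w _ => (mul_assoc _ _ _).symm
      have h2 : F' * g₀ = 0 := by
        rw [hF'def, mul_assoc]
        have := hg₀J.2 t
        rwa [mul_assoc] at this
      rw [← h2, ← h1]
      refine Finset.sum_subset (Finset.filter_subset _ _) fun w hw hnw => ?_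
      have : lam (cF w) * g₀ = 0 := by
        by_contra hne2
        exact hnw (Finset.mem_filter.2 ⟨hw, hne2⟩)
      rw [this, mul_zero]
    have hext := extraction2 hbij A (fun w => lam (cF w) * g₀) wb V₀
      (fun w hw => hwbmax w hw)
      (fun w _ u hu => by
        have hu' : u ∈ ((rcE hbij).symm (lam (cF w) * g₀)).support := hu
        rw [hPw w] at hu'
        exact (rc_Psi hbij hrule htri (D w) V₀ (hDsupp w)).1 u hu')
    rw [hzero, map_zero, Finsupp.zero_apply, if_pos hwbA] at hext
    have hval : cF wb * b₀ = 0 := by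
      have h4 : ((rcE hbij).symm (lam (cF wb) * g₀)) V₀ = tau σ V₀ (cF wb * b₀) := by
        rw [hPw wb]
        have := (rc_Psi hbij hrule htri (D wb) V₀ (hDsupp wb)).2
        rw [this]
        congr 1
      have h5 : tau σ V₀ (cF wb * b₀) = 0 := by rw [← h4]; exact hext.symm
      exact tauL_eq_zero haut h5
    -- minimality contradiction
    have hpJ : lam (cF wb) * g₀ ∈ J := by
      refine ⟨hwbne, fun t' => ?_⟩
      have h7 := hg₀J.2 (t' * lam (cF wb))
      rw [← mul_assoc] at h7
      rw [← mul_assoc]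
      exact h7
    have hlcP : lcF lam x H (lam (cF wb) * g₀) = D wb :=
      lcF_eq hbij hrule htri haut H (hPw wb)
    have hsupp2 : ∀ v ∈ (D wb).support, enc v < enc V₀ := by
      intro v hv
      have hle := hDsupp wb v hv
      rcases lt_or_eq_of_le hle with h | h
      · exact h
      · exfalso
        have hveq : v = V₀ := enc_inj h
        rw [hveq, Finsupp.mem_support_iff] at hv
        apply hv
        show cF wb * dg V₀ = 0
        exact hval
    have hnonempty : (D wb).support.Nonempty := by
      rw [Finsupp.support_nonempty_iff]
      intro h0
      exact hwbne (by rw [hPw wb, h0, map_zero])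
    obtain ⟨u₀, hu₀mem, hu₀max⟩ := Finset.exists_max_image _ enc hnonempty
    have hlt : ldeg (lam (cF wb) * g₀) < sInf (ldeg '' J) := by
      rw [← hdeg, hdegg₀]
      have : ldeg (lam (cF wb) * g₀) = (D wb).support.sup enc := by
        rw [hldegdef]
        show (lcF lam x H (lam (cF wb) * g₀)).support.sup enc = _
        rw [hlcP]
      rw [this]
      calc (D wb).support.sup enc = enc u₀ :=
            le_antisymm (Finset.sup_le hu₀max) (Finset.le_sup hu₀mem)
        _ < enc V₀ := hsupp2 u₀ hu₀mem
    exact absurd (Nat.sInf_le (Set.mem_image_of_mem ldeg hpJ)) (not_le.2 hlt)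
  -- Step 2 : conclude
  have hbv : ∀ w : Wrd n, cF w * b₀ = 0 := by
    intro w
    have h8 : Psi lam x (D w) = 0 := by rw [← hPw w]; exact hS1 w
    have h9 := leftForm_unique hbij hrule htri haut h8
    have h10 := congrArg (fun d => d V₀) h9
    simpa [hDdef, Finsupp.mapRange_apply] using h10
  show F' * lam b₀ = 0
  conv_lhs => rw [← Phi_rc hbij F', ← hcFdef, ← Phi_mapRange]
  have : Finsupp.mapRange (· * b₀) (zero_mul b₀) cF = 0 := by
    ext w
    rw [Finsupp.mapRange_apply, Finsupp.zero_apply]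
    exact hbv w
  rw [this, map_zero]

include hbij hrule htri haut in
lemma master :
    (∀ f g : S, (∀ t : S, f * t * g = 0) → f = 0 ∨ g = 0) ↔
      ∀ a b : R, a ≠ 0 → b ≠ 0 → ∃ t : S, lam a * t * lam b ≠ 0 := by
  constructor
  · intro hprime a b ha hb
    by_contra hcon
    push_neg at hcon
    have hlaminj : ∀ r : R, lam r = 0 → r = 0 := by
      intro r h0
      have h1 : Phi lam x (Finsupp.single 1 r) = lam r := by
        rw [Phi_single, map_one, one_mul]
      have h2 : Phi lam x (Finsupp.single 1 r) = Phi lam x 0 := by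
        rw [h1, h0, map_zero]
      have h3 := hbij.1 h2
      have := congrArg (fun d : Wrd n →₀ R => d (1 : Wrd n)) h3
      simpa using this
    rcases hprime (lam a) (lam b) (fun t => hcon t) with h | h
    · exact ha (hlaminj a h)
    · exact hb (hlaminj b h)
  · intro hcond f g hfg
    by_contra hcon
    push_neg at hcon
    obtain ⟨hf, hg⟩ := hcon
    obtain ⟨a₀, ha₀, hag⟩ := lemmaA hbij hrule htri haut f g hf hfg
    obtain ⟨b₀, hb₀, hab⟩ := lemmaB hbij hrule htri haut a₀ g hg hag
    obtain ⟨t, ht⟩ := hcond a₀ b₀ ha₀ hb₀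
    exact ht (hab t)

end Core




end SkewAux


/-- Let `S` be the `(σ,δ)`-free skew extension with `σ` upper triangular
(`σ_{ij} = 0` for `i > j`) and each diagonal map `σ_{ii}` an automorphism of `R`.
Then `S` is a prime ring if, and only if, `a·S·b ≠ 0` for all nonzero `a, b ∈ R`. -/
theorem skewFreeExt_prime_iff {R : Type} [Ring R] {n : ℕ}
    (σ : R →+* Matrix (Fin n) (Fin n) R) (δ : R → Fin n → R)
    (hδ : IsRightSigmaDeriv σ δ)
    (S : Type) [Ring S] (lam : R →+* S) (x : Fin n → S)
    (hS : IsSkewFreeExt σ δ S lam x)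
    (htri : ∀ (r : R) (i j : Fin n), j < i → σ r i j = 0)
    (haut : ∀ i : Fin n, Function.Bijective (fun r : R => σ r i i)) :
    (∀ f g : S, (∀ t : S, f * t * g = 0) → f = 0 ∨ g = 0) ↔
      ∀ a b : R, a ≠ 0 → b ≠ 0 → ∃ t : S, lam a * t * lam b ≠ 0 := by
  obtain ⟨-, hbij, hrule⟩ := hS
  exact SkewAux.master (σ := σ) (δ := δ) (lam := lam) (x := x) hbij hrule htri haut
end
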